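/- arXiv:2003.02215 — 3 statements merged into one kernel-verified Lean document; each statement's English description precedes it below -/
import Mathlib

section
/- Let f be holomorphic and nonzero at every point of a simple closed contour γ, and suppose f has at least K zeros (with multiplicity) inside γ. Then the principal value of arg f restricted to γ, viewed as a function of the contour parameter, has at least K points of discontinuity (jumps of the principal argument). -/
open Complex Metric

noncomputable def gam (c : ℂ) (R : ℝ) (s : ℝ) : ℂ := c + R * Complex.exp (2 * Real.pi * s * Complex.I)

lemma gam_arg_cast (s : ℝ) : (2 * (Real.pi:ℂ) * (s:ℂ) * Complex.I) = ((2 * Real.pi * s : ℝ) : ℂ) * Complex.I := by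
  push_cast; ring



noncomputable def wfac (c a : ℂ) (R : ℝ) (t : ℝ) : ℂ :=
  1 - ((a - c)/R) * Complex.exp (-(2*Real.pi*t) * Complex.I)

lemma wfac_abs_lt {c a : ℂ} {R : ℝ} (hR : 0 < R) (ha : a ∈ ball c R) (t : ℝ) :
    ‖((a - c)/R) * Complex.exp (-(2*Real.pi*t) * Complex.I)‖ < 1 := by
  have h1 : ‖Complex.exp (-(2*Real.pi*t) * Complex.I)‖ = 1 := by
    rw [show (-(2*(Real.pi:ℂ)*(t:ℝ)) * Complex.I) = ((-(2*Real.pi*t) : ℝ) : ℂ) * Complex.I by push_cast; ring]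
    exact Complex.norm_exp_ofReal_mul_I _
  rw [norm_mul, h1, mul_one, norm_div]
  rw [mem_ball] at ha
  have : ‖a - c‖ < R := by
    first
    | exact ha
    | rwa [dist_eq] at ha
  simp only [Complex.norm_real, Real.norm_eq_abs, abs_of_pos hR]
  rw [div_lt_one hR]
  exact this

lemma wfac_re_pos {c a : ℂ} {R : ℝ} (hR : 0 < R) (ha : a ∈ ball c R) (t : ℝ) :
    0 < (wfac c a R t).re := by
  have h := wfac_abs_lt hR ha t
  set q := ((a - c)/R) * Complex.exp (-(2*Real.pi*t) * Complex.I)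
  have : |q.re| ≤ ‖q‖ := Complex.abs_re_le_norm q
  have h2 : q.re < 1 := lt_of_le_of_lt (le_trans (le_abs_self _) this) h
  simp only [wfac, Complex.sub_re, Complex.one_re]
  linarith

lemma wfac_slit {c a : ℂ} {R : ℝ} (hR : 0 < R) (ha : a ∈ ball c R) (t : ℝ) :
    wfac c a R t ∈ Complex.slitPlane :=
  Complex.mem_slitPlane_iff.mpr (Or.inl (wfac_re_pos hR ha t))

lemma wfac_ne_zero {c a : ℂ} {R : ℝ} (hR : 0 < R) (ha : a ∈ ball c R) (t : ℝ) :
    wfac c a R t ≠ 0 :=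
  Complex.slitPlane_ne_zero (wfac_slit hR ha t)

lemma gam_sub {c a : ℂ} {R : ℝ} (hR : 0 < R) (t : ℝ) :
    gam c R t - a = ((R:ℂ) * Complex.exp (2 * Real.pi * t * Complex.I)) * wfac c a R t := by
  have hRne : (R:ℂ) ≠ 0 := by exact_mod_cast hR.ne'
  simp only [gam, wfac]
  rw [mul_sub, mul_one]
  have : (R:ℂ) * Complex.exp (2 * Real.pi * t * Complex.I) *
      (((a - c)/R) * Complex.exp (-(2*Real.pi*t) * Complex.I)) = a - c := by
    rw [show (R:ℂ) * Complex.exp (2 * Real.pi * t * Complex.I) *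
        (((a - c)/R) * Complex.exp (-(2*Real.pi*t) * Complex.I))
      = (R:ℂ) * ((a-c)/R) * (Complex.exp (2 * Real.pi * t * Complex.I) *
          Complex.exp (-(2*Real.pi*t) * Complex.I)) by ring]
    rw [← Complex.exp_add, mul_div_cancel₀ _ hRne]
    norm_num
  rw [this]
  ring

lemma wfac_one_eq_zero (c a : ℂ) (R : ℝ) : wfac c a R 1 = wfac c a R 0 := by
  simp only [wfac]
  norm_num
  rw [show ((a - c) / (R:ℂ) * Complex.exp (-(2 * ↑Real.pi * Complex.I))) = ((a - c) / (R:ℂ) * (Complex.exp (2 * ↑Real.pi * Complex.I))⁻¹) by rw [← Complex.exp_neg]]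
  rw [Complex.exp_two_pi_mul_I]
  norm_num

lemma continuous_wfac (c a : ℂ) (R : ℝ) : Continuous (wfac c a R) := by
  unfold wfac; fun_prop

lemma continuous_arg_wfac {c a : ℂ} {R : ℝ} (hR : 0 < R) (ha : a ∈ ball c R) :
    Continuous (fun t => Complex.arg (wfac c a R t)) := by
  rw [continuous_iff_continuousAt]
  intro t
  exact (Complex.continuousAt_arg (wfac_slit hR ha t)).comp (continuous_wfac c a R).continuousAt

lemma gam_one_eq_zero (c : ℂ) (R : ℝ) : gam c R 1 = gam c R 0 := by
  simp only [gam]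
  norm_num




lemma gam_mem_sphere (c : ℂ) {R : ℝ} (hR : 0 < R) (s : ℝ) : gam c R s ∈ sphere c R := by
  simp only [gam, mem_sphere_iff_norm, add_sub_cancel_left]
  rw [gam_arg_cast]
  rw [norm_mul, Complex.norm_exp_ofReal_mul_I]
  simp [abs_of_pos hR]

lemma hasDerivAt_gam (c : ℂ) (R : ℝ) (t : ℝ) :
    HasDerivAt (gam c R) ((R : ℂ) * (Complex.exp (2 * Real.pi * t * Complex.I) * (2 * Real.pi * Complex.I))) t := by
  have h1 : HasDerivAt (fun s : ℝ => (s : ℂ)) 1 t := by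
    simpa using (hasDerivAt_id t).ofReal_comp
  have h2 : HasDerivAt (fun s : ℝ => 2 * (Real.pi:ℂ) * (s:ℂ) * Complex.I)
      (2 * Real.pi * Complex.I) t := by
    simpa using (h1.const_mul (2 * (Real.pi:ℂ))).mul_const Complex.I
  have h3 := h2.cexp
  exact (h3.const_mul (R:ℂ)).const_add c

lemma continuous_gam (c : ℂ) (R : ℝ) : Continuous (gam c R) :=
  continuous_const.add (continuous_const.mul (Continuous.cexp (by fun_prop)))

/-- main lift lemma for nonvanishing analytic g -/
lemma exists_lift (V : Set ℂ) (hV : IsOpen V) (c : ℂ) (R : ℝ) (hR : 0 < R)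
    (hsub : closedBall c R ⊆ V) (g : ℂ → ℂ) (hg : AnalyticOnNhd ℂ g V)
    (hgne : ∀ z ∈ closedBall c R, g z ≠ 0) :
    ∃ φ : ℝ → ℂ, Continuous φ ∧ φ 0 = 0 ∧ φ 1 = 0 ∧
      ∀ t, g (gam c R t) = g (gam c R 0) * Complex.exp (φ t) := by
  set γ := gam c R with hγ
  have hmem : ∀ s : ℝ, γ s ∈ closedBall c R := fun s =>
    sphere_subset_closedBall (gam_mem_sphere c hR s)
  have hmemV : ∀ s : ℝ, γ s ∈ V := fun s => hsub (hmem s)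
  have hgneγ : ∀ s : ℝ, g (γ s) ≠ 0 := fun s => hgne _ (hmem s)
  set F : ℂ → ℂ := fun z => deriv g z / g z with hF
  have hFdiff : ∀ z ∈ closedBall c R, DifferentiableAt ℂ F z := by
    intro z hz
    exact ((hg.deriv z (hsub hz)).differentiableAt).div
      ((hg z (hsub hz)).differentiableAt) (hgne z hz)
  set ψ : ℝ → ℂ := fun s => F (γ s) * ((R:ℂ) * (Complex.exp (2 * Real.pi * s * Complex.I) * (2 * Real.pi * Complex.I))) with hψ
  have hψcont : Continuous ψ := by
    rw [continuous_iff_continuousAt]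
    intro s
    exact (((hFdiff _ (hmem s)).continuousAt).comp (continuous_gam c R).continuousAt).mul
      (by fun_prop)
  set φ : ℝ → ℂ := fun t => ∫ s in (0:ℝ)..t, ψ s with hφdef
  have hφ : ∀ t, HasDerivAt φ (ψ t) t := by
    intro t
    exact intervalIntegral.integral_hasDerivAt_right
      (hψcont.intervalIntegrable _ _)
      hψcont.stronglyMeasurable.stronglyMeasurableAtFilter
      hψcont.continuousAt
  have hφcont : Continuous φ := by
    rw [continuous_iff_continuousAt]; exact fun t => (hφ t).continuousAt
  -- ODE : u := g∘γ * exp(-φ) is constant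
  have hu : ∀ t, HasDerivAt (fun s => g (γ s) * Complex.exp (-φ s)) 0 t := by
    intro t
    have hgγ : HasDerivAt (fun s => g (γ s))
        (((R:ℂ) * (Complex.exp (2 * Real.pi * t * Complex.I) * (2 * Real.pi * Complex.I))) •
          deriv g (γ t)) t :=
      ((hg _ (hmemV t)).differentiableAt.hasDerivAt).scomp t (hasDerivAt_gam c R t)
    have hexp : HasDerivAt (fun s => Complex.exp (-φ s)) (Complex.exp (-φ t) * (-ψ t)) t :=
      ((hφ t).neg).cexp
    have := hgγ.mul hexp
    convert this using 1
    · rfl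
    · rfl
    have hgt := hgneγ t
    simp only [smul_eq_mul, hψ, hF]
    field_simp
    ring
  have huconst : ∀ t : ℝ, g (γ t) * Complex.exp (-φ t) = g (γ 0) * Complex.exp (-φ 0) :=
    fun t => is_const_of_deriv_eq_zero (fun s => (hu s).differentiableAt)
      (fun s => (hu s).deriv) t 0
  have hODE : ∀ t, g (γ t) = g (γ 0) * Complex.exp (φ t) := by
    intro t
    have h := huconst t
    have h0 : φ 0 = 0 := by simp [hφdef]
    rw [h0] at h
    simp only [neg_zero, Complex.exp_zero, mul_one] at h
    calc g (γ t) = g (γ t) * Complex.exp (-φ t) * Complex.exp (φ t) := by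
          rw [mul_assoc, ← Complex.exp_add]; simp
      _ = g (γ 0) * Complex.exp (φ t) := by rw [h]
  -- φ 1 = circle integral of F = 0
  have hφ1 : φ 1 = 0 := by
    have hcirc : (∮ z in C(c, R), F z) = 0 := by
      apply circleIntegral_eq_zero_of_differentiable_on_off_countable hR.le
        Set.countable_empty
      · exact fun z hz => ((hFdiff z hz).continuousAt).continuousWithinAt
      · exact fun z hz => hFdiff z (ball_subset_closedBall hz.1)
    have hsub1 : φ 1 = (2 * Real.pi) • ∫ s in (0:ℝ)..1,
        (fun θ : ℝ => deriv (circleMap c R) θ • F (circleMap c R θ)) (2 * Real.pi * s) := by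
      rw [hφdef, ← intervalIntegral.integral_smul]
      apply intervalIntegral.integral_congr
      intro s _
      simp only [deriv_circleMap, circleMap, smul_eq_mul, real_smul]
      rw [hψ]
      push_cast
      rw [gam_arg_cast]
      simp only [hγ, gam, gam_arg_cast]
      push_cast
      ring
    rw [hsub1, intervalIntegral.smul_integral_comp_mul_left
      (fun θ : ℝ => deriv (circleMap c R) θ • F (circleMap c R θ)) (2 * Real.pi)]
    simpa [circleIntegral, mul_zero, mul_one] using hcirc
  exact ⟨φ, hφcont, by simp [hφdef], hφ1, hODE⟩


lemma factor_single (V : Set ℂ) (f : ℂ → ℂ) (hf : AnalyticOnNhd ℂ f V)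
    (a : ℂ) (ha : a ∈ V) (n : ℕ) (h : analyticOrderAt f a = (n : ℕ∞)) :
    ∃ g : ℂ → ℂ, AnalyticOnNhd ℂ g V ∧ g a ≠ 0 ∧ ∀ z ∈ V, f z = (z - a) ^ n * g z := by
  obtain ⟨h₀, hh₀, hh₀a, hev⟩ := ((hf a ha).analyticOrderAt_eq_natCast).mp h
  classical
  refine ⟨fun z => if z = a then h₀ a else f z / (z - a) ^ n, ?_, by simp [hh₀a], ?_⟩
  · intro z hz
    by_cases hza : z = a
    · subst hza
      refine hh₀.congr ?_
      filter_upwards [hev] with w hw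
      by_cases hwa : w = z
      · simp [hwa]
      · have hp : (w - z) ^ n ≠ 0 := pow_ne_zero _ (sub_ne_zero.2 hwa)
        simp only [hwa, if_false, hw, smul_eq_mul]
        field_simp
    · have hA : AnalyticAt ℂ (fun w => f w * ((w - a) ^ n)⁻¹) z :=
        (hf z hz).mul (((analyticAt_id.sub analyticAt_const).pow n).inv
          (pow_ne_zero _ (sub_ne_zero.2 hza)))
      refine hA.congr ?_
      filter_upwards [isOpen_ne.mem_nhds hza] with w hw
      simp [hw, div_eq_mul_inv]
  · intro z hz
    by_cases hza : z = a
    · subst hza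
      have hs := hev.self_of_nhds
      by_cases hn : n = 0
      · simpa [hn] using hs
      · simp only [sub_self, zero_pow hn, smul_eq_mul, zero_mul] at hs
        simp [hs, zero_pow hn]
    · have hp : (z - a) ^ n ≠ 0 := pow_ne_zero _ (sub_ne_zero.2 hza)
      simp only [hza, if_false]
      field_simp

lemma factor_finset (V : Set ℂ) (hV : IsOpen V) (Z : Finset ℂ) (m : ℂ → ℕ) :
    ∀ f : ℂ → ℂ, AnalyticOnNhd ℂ f V → (∀ a ∈ Z, a ∈ V) →
    (∀ a ∈ Z, ∀ hA : AnalyticAt ℂ f a, analyticOrderAt f a = (m a : ℕ∞)) →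
    ∃ g : ℂ → ℂ, AnalyticOnNhd ℂ g V ∧ (∀ a ∈ Z, g a ≠ 0) ∧
      ∀ z ∈ V, f z = (∏ a ∈ Z, (z - a) ^ m a) * g z := by
  classical
  induction Z using Finset.induction_on with
  | empty => intro f hf _ _; exact ⟨f, hf, by simp, by simp⟩
  | @insert a Z' haZ ih =>
    intro f hf hmem hord
    have haV : a ∈ V := hmem a (Finset.mem_insert_self a Z')
    obtain ⟨g₁, hg₁, hg₁a, heq⟩ := factor_single V f hf a haV (m a)
      (hord a (Finset.mem_insert_self a Z') (hf a haV))
    have hord' : ∀ b ∈ Z', ∀ hA : AnalyticAt ℂ g₁ b, analyticOrderAt g₁ b = (m b : ℕ∞) := by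
      intro b hb hA
      have hbV : b ∈ V := hmem b (Finset.mem_insert_of_mem hb)
      have hba : b ≠ a := by rintro rfl; exact haZ hb
      have hfb : analyticOrderAt f b = (m b : ℕ∞) := hord b (Finset.mem_insert_of_mem hb) (hf b hbV)
      obtain ⟨h₀, hh₀, hh₀b, hev⟩ := ((hf b hbV).analyticOrderAt_eq_natCast).mp hfb
      refine (hA.analyticOrderAt_eq_natCast).mpr
        ⟨fun z => h₀ z * ((z - a) ^ m a)⁻¹,
         hh₀.mul (((analyticAt_id.sub analyticAt_const).pow _).inv
           (pow_ne_zero _ (sub_ne_zero.2 hba))), by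
             simp only [ne_eq, mul_eq_zero, not_or]
             exact ⟨hh₀b, inv_ne_zero (pow_ne_zero _ (sub_ne_zero.2 hba))⟩, ?_⟩
      filter_upwards [hev, hV.mem_nhds hbV, isOpen_ne.mem_nhds hba] with z h1 h2 h3
      have hpa : (z - a) ^ m a ≠ 0 := pow_ne_zero _ (sub_ne_zero.2 h3)
      have := heq z h2
      rw [h1] at this
      simp only [smul_eq_mul] at this ⊢
      field_simp
      linear_combination -this
    obtain ⟨g, hg, hgne, heq'⟩ := ih g₁ hg₁
      (fun b hb => hmem b (Finset.mem_insert_of_mem hb)) hord'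
    refine ⟨g, hg, ?_, ?_⟩
    · intro b hb
      rcases Finset.mem_insert.mp hb with rfl | hb'
      · intro h0
        apply hg₁a
        rw [heq' b haV, h0, mul_zero]
      · exact hgne b hb'
    · intro z hz
      rw [heq z hz, heq' z hz, Finset.prod_insert haZ]
      ring


def PolarP (z : ℂ) (ρ θ : ℝ) : Prop := 0 < ρ ∧ z = (ρ:ℂ) * Complex.exp ((θ:ℝ) * Complex.I)

lemma polar_mul {z₁ z₂ : ℂ} {ρ₁ ρ₂ θ₁ θ₂ : ℝ} (h₁ : PolarP z₁ ρ₁ θ₁) (h₂ : PolarP z₂ ρ₂ θ₂) :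
    PolarP (z₁ * z₂) (ρ₁ * ρ₂) (θ₁ + θ₂) := by
  refine ⟨mul_pos h₁.1 h₂.1, ?_⟩
  rw [h₁.2, h₂.2]
  push_cast
  rw [add_mul, Complex.exp_add]
  ring

lemma polar_one : PolarP 1 1 0 := ⟨one_pos, by simp⟩

lemma polar_pow {z : ℂ} {ρ θ : ℝ} (h : PolarP z ρ θ) (k : ℕ) :
    PolarP (z ^ k) (ρ ^ k) (k * θ) := by
  induction k with
  | zero => simpa using polar_one
  | succ k ih =>
    have := polar_mul ih h
    rw [pow_succ, pow_succ]
    have hθ : ((k:ℝ)+1) * θ = (k:ℝ) * θ + θ := by ring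
    push_cast
    rw [hθ]
    exact this

lemma polar_prod {ι : Type*} (s : Finset ι) (z : ι → ℂ) (ρ θ : ι → ℝ)
    (h : ∀ i ∈ s, PolarP (z i) (ρ i) (θ i)) :
    PolarP (∏ i ∈ s, z i) (∏ i ∈ s, ρ i) (∑ i ∈ s, θ i) := by
  classical
  induction s using Finset.induction_on with
  | empty => simpa using polar_one
  | @insert a s' ha ih =>
    rw [Finset.prod_insert ha, Finset.prod_insert ha, Finset.sum_insert ha]
    exact polar_mul (h a (Finset.mem_insert_self a s'))
      (ih fun i hi => h i (Finset.mem_insert_of_mem hi))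

lemma polar_of_ne {z : ℂ} (hz : z ≠ 0) : PolarP z ‖z‖ (Complex.arg z) :=
  ⟨norm_pos_iff.mpr hz, (Complex.norm_mul_exp_arg_mul_I z).symm⟩

lemma polar_arg {z : ℂ} {ρ θ : ℝ} (h : PolarP z ρ θ) :
    ∃ k : ℤ, θ - Complex.arg z = 2 * Real.pi * k := by
  have hz : z ≠ 0 := by
    rw [h.2]
    exact mul_ne_zero (by exact_mod_cast h.1.ne') (Complex.exp_ne_zero _)
  have h2 := Complex.norm_mul_exp_arg_mul_I z
  have habs : ‖z‖ = ρ := by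
    rw [h.2]
    simp [Complex.norm_exp, abs_of_pos h.1]
  rw [habs] at h2
  have hexp : Complex.exp ((θ:ℝ) * Complex.I) = Complex.exp ((Complex.arg z : ℝ) * Complex.I) := by
    have h4 : (ρ:ℂ) * Complex.exp ((θ:ℝ) * Complex.I) = (ρ:ℂ) * Complex.exp ((Complex.arg z : ℝ) * Complex.I) := h.2.symm.trans h2.symm
    exact mul_left_cancel₀ (by exact_mod_cast h.1.ne' : (ρ:ℂ) ≠ 0) h4
  obtain ⟨k, hk⟩ := Complex.exp_eq_exp_iff_exists_int.mp hexp
  refine ⟨k, ?_⟩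
  have hI : ((θ:ℂ)) = (Complex.arg z : ℂ) + k * (2 * Real.pi) := by
    have := hk
    rw [mul_comm ((k:ℂ)) _] at this
    have h3 : ((θ:ℂ)) * Complex.I = ((Complex.arg z : ℂ) + 2 * Real.pi * k) * Complex.I := by
      rw [this]; ring
    have := mul_right_cancel₀ Complex.I_ne_zero h3
    rw [this]; ring
  have : θ = Complex.arg z + k * (2 * Real.pi) := by exact_mod_cast hI
  rw [this]; ring


lemma jump_count (A Θ : ℝ → ℝ) (n : ℝ → ℤ) (N : ℕ)
    (hΘ : Continuous Θ)
    (hn : ∀ t, Θ t - A t = 2 * Real.pi * n t)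
    (hA : ∀ t, A t ∈ Set.Ioc (-Real.pi) Real.pi)
    (hAπ : ∀ τ, ¬ ContinuousAt A τ → A τ = Real.pi)
    (hn1 : n 1 = n 0 + N) :
    ∃ S : Finset ℝ, S.card = N ∧ ∀ t ∈ S, t ∈ Set.Ico (0:ℝ) 1 ∧ ¬ ContinuousAt A t := by
  classical
  have pi_pos := Real.pi_pos
  -- continuity gives local constancy of n
  have hconst : ∀ τ, ContinuousAt A τ → ∀ᶠ s in nhds τ, n s = n τ := by
    intro τ hc
    have h : ContinuousAt (fun s => Θ s - A s) τ := (hΘ.continuousAt).sub hc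
    have hev := Metric.tendsto_nhds.mp h Real.pi pi_pos
    filter_upwards [hev] with s hs
    rw [hn s, hn τ, Real.dist_eq] at hs
    have h2 : |2 * Real.pi * ((n s : ℝ) - n τ)| < Real.pi := by
      rw [show 2 * Real.pi * (n s:ℝ) - 2 * Real.pi * (n τ:ℝ)
        = 2 * Real.pi * ((n s:ℝ) - n τ) by ring] at hs
      exact hs
    by_contra hne
    have h1 : (1:ℤ) ≤ |n s - n τ| := Int.one_le_abs (by omega)
    have h3 : (1:ℝ) ≤ |(n s : ℝ) - n τ| := by
      calc (1:ℝ) = ((1:ℤ):ℝ) := by norm_num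
        _ ≤ ((|n s - n τ|:ℤ):ℝ) := by exact_mod_cast h1
        _ = |(n s : ℝ) - n τ| := by push_cast; simp
    rw [abs_mul, abs_of_pos (by linarith : (0:ℝ) < 2 * Real.pi)] at h2
    nlinarith
  -- in general n jumps locally only to {n τ, n τ + 1}
  have hloc : ∀ τ, ∀ᶠ s in nhds τ, n s = n τ ∨ n s = n τ + 1 := by
    intro τ
    by_cases hc : ContinuousAt A τ
    · exact (hconst τ hc).mono fun s h => Or.inl h
    · have hπ : A τ = Real.pi := hAπ τ hc
      have hev := Metric.tendsto_nhds.mp (hΘ.continuousAt (x := τ))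
        (Real.pi/2) (by linarith)
      filter_upwards [hev] with s hs
      rw [Real.dist_eq] at hs
      have habs := abs_lt.mp hs
      have e1 : 2 * Real.pi * ((n s : ℝ) - n τ) = (Θ s - Θ τ) + (Real.pi - A s) := by
        have h1 := hn s
        have h2 := hn τ
        rw [hπ] at h2
        ring_nf
        ring_nf at h1 h2
        linarith
      obtain ⟨hAs1, hAs2⟩ := hA s
      have hb1 : -(Real.pi/2) < 2 * Real.pi * ((n s : ℝ) - n τ) := by
        rw [e1]; linarith [habs.1]
      have hb2 : 2 * Real.pi * ((n s : ℝ) - n τ) < 2 * Real.pi + Real.pi/2 := by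
        rw [e1]; linarith [habs.2]
      have k1 : (-1:ℝ) < ((n s : ℝ) - n τ) := by
        by_contra h
        push_neg at h
        have : 2 * Real.pi * ((n s : ℝ) - n τ) ≤ 2 * Real.pi * (-1) := by nlinarith
        linarith
      have k2 : ((n s : ℝ) - n τ) < 2 := by
        by_contra h
        push_neg at h
        have : 2 * Real.pi * 2 ≤ 2 * Real.pi * ((n s : ℝ) - n τ) := by nlinarith
        linarith
      have k1' : (-1:ℤ) < n s - n τ := by exact_mod_cast (by push_cast; linarith : ((-1:ℤ):ℝ) < ((n s - n τ : ℤ):ℝ))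
      have k2' : (n s - n τ : ℤ) < 2 := by exact_mod_cast (by push_cast; linarith : ((n s - n τ : ℤ):ℝ) < ((2:ℤ):ℝ))
      omega
  -- the jump times
  set T : ℕ → Set ℝ := fun j => {t | t ∈ Set.Icc (0:ℝ) 1 ∧ (n 0 + j + 1 : ℤ) ≤ n t} with hT
  have key : ∀ j, j < N → n (sInf (T j)) = n 0 + j ∧ sInf (T j) ∈ Set.Ico (0:ℝ) 1 ∧
      ¬ ContinuousAt A (sInf (T j)) := by
    intro j hj
    have h1T : (1:ℝ) ∈ T j := by
      refine ⟨⟨by norm_num, le_refl 1⟩, ?_⟩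
      rw [hn1]; push_cast; omega
    have hne : (T j).Nonempty := ⟨1, h1T⟩
    have hbdd : BddBelow (T j) := ⟨0, fun x hx => hx.1.1⟩
    set τ := sInf (T j) with hτdef
    have h0τ : 0 ≤ τ := le_csInf hne (fun x hx => hx.1.1)
    have hτ1 : τ ≤ 1 := csInf_le hbdd h1T
    have hfreq : ∃ᶠ s in nhds τ, s ∈ T j :=
      mem_closure_iff_frequently.mp (csInf_mem_closure hne hbdd)
    -- lower bound for n τ
    have hge : n 0 + j ≤ n τ := by
      obtain ⟨s, hsT, hsloc⟩ := (hfreq.and_eventually (hloc τ)).exists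
      have := hsT.2
      rcases hsloc with h | h <;> omega
    -- upper bound for n τ
    have hle : n τ ≤ n 0 + j := by
      by_contra hgt
      push_neg at hgt
      rcases eq_or_lt_of_le h0τ with h0 | h0
      · rw [← h0] at hgt; omega
      · -- τ > 0 : points to the left have n ≤ n 0 + j, contradicting hloc
        have hev2 : ∀ᶠ s in nhdsWithin τ (Set.Iio τ), n s = n τ ∨ n s = n τ + 1 :=
          nhdsWithin_le_nhds (hloc τ)
        have hev3 : Set.Ioo 0 τ ∈ nhdsWithin τ (Set.Iio τ) :=
          Ioo_mem_nhdsLT_of_mem ⟨h0, le_refl τ⟩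
        obtain ⟨s, hsloc, hs⟩ := (hev2.and (Filter.eventually_of_mem hev3 (fun x hx => hx))).exists
        have hsnot : s ∉ T j := notMem_of_lt_csInf hs.2 hbdd
        have : n s ≤ n 0 + j := by
          by_contra hns
          exact hsnot ⟨⟨hs.1.le, le_trans hs.2.le hτ1⟩, by omega⟩
        rcases hsloc with h | h <;> omega
    have hnτ : n τ = n 0 + j := le_antisymm hle hge
    have hτlt1 : τ < 1 := by
      rcases eq_or_lt_of_le hτ1 with h1 | h1
      · rw [h1] at hnτ; omega
      · exact h1
    have hdisc : ¬ ContinuousAt A τ := by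
      intro hc
      obtain ⟨s, hsT, hseq⟩ := (hfreq.and_eventually (hconst τ hc)).exists
      have := hsT.2
      omega
    exact ⟨hnτ, ⟨h0τ, hτlt1⟩, hdisc⟩
  refine ⟨(Finset.range N).image (fun j => sInf (T j)), ?_, ?_⟩
  · rw [Finset.card_image_of_injOn, Finset.card_range]
    intro j1 hj1 j2 hj2 heq
    have h1 := (key j1 (Finset.mem_range.mp (Finset.mem_coe.mp hj1))).1
    have h2 := (key j2 (Finset.mem_range.mp (Finset.mem_coe.mp hj2))).1
    simp only at heq
    rw [heq] at h1
    rw [h1] at h2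
    omega
  · intro t ht
    obtain ⟨j, hj, rfl⟩ := Finset.mem_image.mp ht
    exact ⟨(key j (Finset.mem_range.mp hj)).2.1, (key j (Finset.mem_range.mp hj)).2.2⟩

/-- If `f` is holomorphic on a neighborhood of a closed disk, nonvanishing on the
boundary circle `γ(t) = c + R e^{2πit}`, and `f` has at least `K` zeros (counted
with multiplicity) inside, then the principal argument of `f ∘ γ`, as a function of
the contour parameter `t ∈ [0,1)`, has at least `K` points of discontinuity. -/
theorem principal_arg_has_K_jumps
    (f : ℂ → ℂ) (c : ℂ) (R : ℝ) (hR : 0 < R)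
    (U : Set ℂ) (hU : IsOpen U) (hsub : closedBall c R ⊆ U)
    (hf : DifferentiableOn ℂ f U)
    (hne : ∀ z ∈ sphere c R, f z ≠ 0)
    (K : ℕ)
    (Z : Finset ℂ) (hZ : ∀ z : ℂ, z ∈ Z ↔ z ∈ ball c R ∧ f z = 0)
    (m : ℂ → ℕ)
    (hm : ∀ z ∈ Z, ∀ hA : AnalyticAt ℂ f z, analyticOrderAt f z = (m z : ℕ∞))
    (hK : K ≤ ∑ z ∈ Z, m z) :
    ∃ S : Finset ℝ, K ≤ S.card ∧ ∀ t ∈ S, t ∈ Set.Ico (0 : ℝ) 1 ∧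
      ¬ ContinuousAt
          (fun s : ℝ => Complex.arg (f (c + R * Complex.exp (2 * Real.pi * s * Complex.I)))) t := by
  classical
  have pi_pos := Real.pi_pos
  set N : ℕ := ∑ z ∈ Z, m z with hN
  have hfa : AnalyticOnNhd ℂ f U := hf.analyticOnNhd hU
  have hZball : ∀ a ∈ Z, a ∈ ball c R := fun a ha => ((hZ a).mp ha).1
  have hZU : ∀ a ∈ Z, a ∈ U := fun a ha =>
    hsub (ball_subset_closedBall (hZball a ha))
  obtain ⟨g, hg, hgZ, heqf⟩ := factor_finset U hU Z m f hfa hZU hm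
  -- g does not vanish on the closed ball
  have hgball : ∀ z ∈ closedBall c R, g z ≠ 0 := by
    intro z hz
    by_cases hzZ : z ∈ Z
    · exact hgZ z hzZ
    · have hfz : f z ≠ 0 := by
        rcases lt_or_eq_of_le (mem_closedBall.mp hz) with h | h
        · intro h0
          exact hzZ ((hZ z).mpr ⟨mem_ball.mpr h, h0⟩)
        · exact hne z (mem_sphere.mpr h)
      intro h0
      apply hfz
      rw [heqf z (hsub hz), h0, mul_zero]
  obtain ⟨φ, hφc, hφ0, hφ1, hODE⟩ := exists_lift U hU c R hR hsub g hg hgball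
  set γ : ℝ → ℂ := gam c R with hγdef
  set A : ℝ → ℝ := fun s => Complex.arg (f (γ s)) with hAdef
  have hγsphere : ∀ t : ℝ, γ t ∈ sphere c R := fun t => gam_mem_sphere c hR t
  have hγU : ∀ t : ℝ, γ t ∈ U := fun t =>
    hsub (sphere_subset_closedBall (hγsphere t))
  have hfγ : ∀ t : ℝ, f (γ t) ≠ 0 := fun t => hne _ (hγsphere t)
  have hgγ0 : g (γ 0) ≠ 0 := hgball _ (sphere_subset_closedBall (hγsphere 0))
  set Θ : ℝ → ℝ := fun t => (φ t).im + Complex.arg (g (γ 0)) +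
    ∑ a ∈ Z, (m a : ℝ) * (2 * Real.pi * t + Complex.arg (wfac c a R t)) with hΘdef
  have hΘc : Continuous Θ := by
    apply Continuous.add
    · exact (Complex.continuous_im.comp hφc).add continuous_const
    · apply continuous_finset_sum
      intro a ha
      exact continuous_const.mul ((continuous_const.mul continuous_id).add
        (continuous_arg_wfac hR (hZball a ha)))
  -- exactness : Θ t - A t ∈ 2πℤ
  have hE : ∀ t : ℝ, ∃ k : ℤ, Θ t - A t = 2 * Real.pi * k := by
    intro t
    have hPexp : PolarP (Complex.exp (φ t)) (Real.exp (φ t).re) ((φ t).im) := by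
      refine ⟨Real.exp_pos _, ?_⟩
      conv_lhs => rw [← Complex.re_add_im (φ t)]
      rw [Complex.exp_add, Complex.ofReal_exp]
    have hPg : PolarP (g (γ t)) (‖g (γ 0)‖ * Real.exp (φ t).re)
        (Complex.arg (g (γ 0)) + (φ t).im) := by
      rw [hODE t]
      exact polar_mul (polar_of_ne hgγ0) hPexp
    have hPa : ∀ a ∈ Z, PolarP ((γ t - a) ^ m a)
        ((R * ‖wfac c a R t‖) ^ m a)
        ((m a : ℝ) * (2 * Real.pi * t + Complex.arg (wfac c a R t))) := by
      intro a ha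
      have hbase : PolarP (γ t - a) (R * ‖wfac c a R t‖)
          (2 * Real.pi * t + Complex.arg (wfac c a R t)) := by
        rw [hγdef, gam_sub hR]
        refine polar_mul ⟨hR, ?_⟩ (polar_of_ne (wfac_ne_zero hR (hZball a ha) t))
        rw [gam_arg_cast]
      exact polar_pow hbase (m a)
    have htot : PolarP (f (γ t))
        ((∏ a ∈ Z, (R * ‖wfac c a R t‖) ^ m a) *
          (‖g (γ 0)‖ * Real.exp (φ t).re))
        ((∑ a ∈ Z, (m a : ℝ) * (2 * Real.pi * t + Complex.arg (wfac c a R t))) +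
          (Complex.arg (g (γ 0)) + (φ t).im)) := by
      rw [heqf (γ t) (hγU t)]
      exact polar_mul (polar_prod Z _ _ _ hPa) hPg
    obtain ⟨k, hk⟩ := polar_arg htot
    refine ⟨k, ?_⟩
    rw [hΘdef, hAdef]
    simp only
    rw [← hk]
    ring
  set n : ℝ → ℤ := fun t => Classical.choose (hE t) with hndef
  have hn : ∀ t, Θ t - A t = 2 * Real.pi * n t := fun t => Classical.choose_spec (hE t)
  have hAIoc : ∀ t, A t ∈ Set.Ioc (-Real.pi) Real.pi := fun t => Complex.arg_mem_Ioc _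
  have hAπ : ∀ τ, ¬ ContinuousAt A τ → A τ = Real.pi := by
    intro τ hd
    by_contra hAne
    apply hd
    have hslit : f (γ τ) ∈ Complex.slitPlane :=
      Complex.mem_slitPlane_iff_arg.mpr ⟨hAne, hfγ τ⟩
    have hfγc : ContinuousAt (f ∘ γ) τ :=
      ((hfa _ (hγU τ)).differentiableAt.continuousAt).comp (continuous_gam c R).continuousAt
    exact ContinuousAt.comp (g := Complex.arg) (f := f ∘ γ) (x := τ)
      (Complex.continuousAt_arg hslit) hfγc
  -- winding : n 1 = n 0 + N
  have hΘN : Θ 1 = Θ 0 + 2 * Real.pi * (N : ℝ) := by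
    rw [hΘdef]
    simp only
    rw [hφ0, hφ1]
    have hc : ∀ a ∈ Z, (m a : ℝ) * (2 * Real.pi * 1 + Complex.arg (wfac c a R 1)) =
        (m a : ℝ) * (2 * Real.pi * 0 + Complex.arg (wfac c a R 0)) + 2 * Real.pi * (m a : ℝ) := by
      intro a ha
      rw [wfac_one_eq_zero]
      ring
    rw [Finset.sum_congr rfl hc, Finset.sum_add_distrib]
    have hcast : ∑ a ∈ Z, 2 * Real.pi * (m a : ℝ) = 2 * Real.pi * (N : ℝ) := by
      rw [← Finset.mul_sum, hN]
      push_cast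
      ring
    rw [hcast]
    ring
  have hA10 : A 1 = A 0 := by
    rw [hAdef]
    simp only [hγdef, gam_one_eq_zero]
  have hn1 : n 1 = n 0 + N := by
    have h1 := hn 1
    have h0 := hn 0
    rw [hΘN, hA10] at h1
    have : 2 * Real.pi * ((n 1 : ℝ)) = 2 * Real.pi * ((n 0 : ℝ) + (N : ℝ)) := by
      rw [← h1]
      rw [mul_add, ← h0]
      ring
    have h2 : ((n 1 : ℝ)) = ((n 0 : ℝ) + (N : ℝ)) :=
      mul_left_cancel₀ (by positivity) this
    exact_mod_cast h2
  obtain ⟨S, hcard, hprop⟩ := jump_count A Θ n N hΘc hn hAIoc hAπ hn1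
  exact ⟨S, by rw [hcard]; exact hK, hprop⟩
end

section
/- If q ∈ L¹(ℝ) with ∫|q| dt < ∞, then the Jost coefficient a(ζ) of the Zakharov–Shabat problem satisfies |a(ζ) − 1| ≤ e^{‖q‖₁} − 1 and a(ζ) → 1 as Im ζ → +∞ uniformly; consequently all zeros of a in the upper half-plane lie in a bounded strip 0 < Im ζ ≤ U for some U depending only on q. -/
open Complex Filter MeasureTheory

/-- `IsZSJostCoeff q a ζ` says that `a ζ` is the value of the Jost scattering
coefficient of the focusing Zakharov–Shabat problem with potential `q` at the
spectral parameter `ζ`. -/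
def IsZSJostCoeff (q : ℝ → ℂ) (a : ℂ → ℂ) (ζ : ℂ) : Prop :=
  ∃ ψ : ℝ → ℂ × ℂ,
    (∀ t : ℝ, HasDerivAt (fun s => (ψ s).1)
        (q t * (ψ t).2 - Complex.I * ζ * (ψ t).1) t) ∧
    (∀ t : ℝ, HasDerivAt (fun s => (ψ s).2)
        ((starRingEnd ℂ) (q t) * (ψ t).1 + Complex.I * ζ * (ψ t).2) t) ∧
    Tendsto (fun t : ℝ => (ψ t).1 * Complex.exp (Complex.I * ζ * t)) atBot (nhds 1) ∧
    Tendsto (fun t : ℝ => (ψ t).2 * Complex.exp (-Complex.I * ζ * t)) atBot (nhds 0) ∧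
    Tendsto (fun t : ℝ => (ψ t).1 * Complex.exp (Complex.I * ζ * t)) atTop (nhds (a ζ))

open Set

variable {f : ℝ → ℝ}

noncomputable def QQ (f : ℝ → ℝ) (t : ℝ) : ℝ := ∫ s in Set.Iic t, f s

variable {f : ℝ → ℝ}

lemma QQ_mono (hf : Integrable f) (hf0 : ∀ t, 0 ≤ f t) : Monotone (QQ f) :=
  fun r t h => setIntegral_mono_set hf.integrableOn (Eventually.of_forall hf0)
    ((Iic_subset_Iic.2 h).eventuallyLE)

lemma QQ_nonneg (hf0 : ∀ t, 0 ≤ f t) (t : ℝ) : 0 ≤ QQ f t :=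
  setIntegral_nonneg measurableSet_Iic (fun s _ => hf0 s)

lemma QQ_le_total (hf : Integrable f) (hf0 : ∀ t, 0 ≤ f t) (t : ℝ) :
    QQ f t ≤ ∫ s, f s :=
  setIntegral_le_integral hf (Eventually.of_forall hf0)

lemma QQ_diff (hf : Integrable f) {r t : ℝ} (h : r ≤ t) :
    QQ f t - QQ f r = ∫ s in Set.Ioc r t, f s := by
  rw [QQ, QQ, intervalIntegral.integral_Iic_sub_Iic hf.integrableOn hf.integrableOn,
    intervalIntegral.integral_of_le h]

lemma QQ_eq (hf : Integrable f) (t : ℝ) :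
    QQ f t = QQ f 0 + ∫ s in (0:ℝ)..t, f s := by
  rw [← intervalIntegral.integral_Iic_sub_Iic hf.integrableOn hf.integrableOn, QQ, QQ]
  ring

lemma QQ_continuous (hf : Integrable f) : Continuous (QQ f) := by
  have : Continuous fun t => QQ f 0 + ∫ s in (0:ℝ)..t, f s :=
    continuous_const.add (intervalIntegral.continuous_primitive
      (fun a b => hf.intervalIntegrable) 0)
  exact this.congr (fun t => (QQ_eq hf t).symm)

lemma QQ_tendsto_atBot (hf : Integrable f) : Tendsto (QQ f) atBot (nhds 0) := by
  have h1 : Tendsto (fun t : ℝ => ∫ s in t..(0:ℝ), f s) atBot (nhds (QQ f 0)) :=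
    intervalIntegral_tendsto_integral_Iic 0 hf.integrableOn tendsto_id
  have h2 : ∀ t : ℝ, QQ f t = QQ f 0 - ∫ s in t..(0:ℝ), f s := by
    intro t
    rw [← intervalIntegral.integral_Iic_sub_Iic hf.integrableOn hf.integrableOn, QQ, QQ]
    ring
  have h3 := (tendsto_const_nhds (x := QQ f 0) (f := atBot (α := ℝ))).sub h1
  rw [sub_self] at h3
  exact h3.congr (fun t => (h2 t).symm)

lemma QQ_tendsto_atTop (hf : Integrable f) :
    Tendsto (QQ f) atTop (nhds (∫ s, f s)) := by
  have h1 : Tendsto (fun t : ℝ => ∫ s in (0:ℝ)..t, f s) atTop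
      (nhds (∫ s in Set.Ioi (0:ℝ), f s)) :=
    intervalIntegral_tendsto_integral_Ioi 0 hf.integrableOn tendsto_id
  have h2 := (tendsto_const_nhds (x := QQ f 0) (f := atTop (α := ℝ))).add h1
  rw [QQ, intervalIntegral.integral_Iic_add_Ioi hf.integrableOn hf.integrableOn] at h2
  exact h2.congr (fun t => (QQ_eq hf t).symm)

lemma expQQ_integrable (hf : Integrable f) (hf0 : ∀ t, 0 ≤ f t) :
    Integrable (fun s => f s * Real.exp (QQ f s)) := by
  have h : Integrable (fun s => Real.exp (QQ f s) * f s) :=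
    hf.bdd_mul ((Real.continuous_exp.comp (QQ_continuous hf)).aestronglyMeasurable)
      (Eventually.of_forall fun s => by
        rw [Real.norm_eq_abs, _root_.abs_of_nonneg (Real.exp_pos _).le]
        exact Real.exp_le_exp.2 (QQ_le_total hf hf0 s))
  exact h.congr (Eventually.of_forall fun s => mul_comm _ _)

lemma key_exp_integral (hf : Integrable f) (hf0 : ∀ t, 0 ≤ f t) (t : ℝ) :
    ∫ s in Set.Iic t, f s * Real.exp (QQ f s) ≤ Real.exp (QQ f t) - 1 := by
  have hQm := QQ_mono hf hf0
  have hIg := (expQQ_integrable hf hf0).integrableOn (s := Set.Iic t)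
  -- base estimate on Iic
  have base : ∀ x : ℝ, ∫ s in Set.Iic x, f s * Real.exp (QQ f s)
      ≤ Real.exp (QQ f x) * QQ f x := by
    intro x
    have h1 : ∫ s in Set.Iic x, f s * Real.exp (QQ f s)
        ≤ ∫ s in Set.Iic x, Real.exp (QQ f x) * f s := by
      refine setIntegral_mono_on ((expQQ_integrable hf hf0).integrableOn)
        (hf.integrableOn.const_mul _) measurableSet_Iic (fun s hs => ?_)
      rw [mul_comm]
      exact mul_le_mul_of_nonneg_right (Real.exp_le_exp.2 (hQm hs)) (hf0 s)
    rw [integral_const_mul] at h1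
    exact h1
  -- step estimate on Ioc
  have step : ∀ x y : ℝ, x ≤ y → ∫ s in Set.Ioc x y, f s * Real.exp (QQ f s)
      ≤ Real.exp (QQ f y) * (QQ f y - QQ f x) := by
    intro x y hxy
    have h1 : ∫ s in Set.Ioc x y, f s * Real.exp (QQ f s)
        ≤ ∫ s in Set.Ioc x y, Real.exp (QQ f y) * f s := by
      refine setIntegral_mono_on ((expQQ_integrable hf hf0).integrableOn)
        (hf.integrableOn.const_mul _) measurableSet_Ioc (fun s hs => ?_)
      rw [mul_comm]
      exact mul_le_mul_of_nonneg_right (Real.exp_le_exp.2 (hQm hs.2)) (hf0 s)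
    rw [integral_const_mul] at h1
    rw [QQ_diff hf hxy]
    exact h1
  -- main bound for each N ≥ 1
  have main : ∀ N : ℕ, 1 ≤ N → ∫ s in Set.Iic t, f s * Real.exp (QQ f s)
      ≤ Real.exp (QQ f t / N) * (Real.exp (QQ f t) - 1) := by
    intro N hN
    set δ : ℝ := QQ f t / N with hδ
    have hδ0 : 0 ≤ δ := div_nonneg (QQ_nonneg hf0 t) (Nat.cast_nonneg N)
    have hNδ : (N : ℝ) * δ = QQ f t := by
      rw [hδ, mul_div_cancel₀ _ (Nat.cast_ne_zero.2 (by omega))]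
    rcases eq_or_lt_of_le hδ0 with hδz | hδp
    · have hQt : QQ f t = 0 := by rw [← hNδ, ← hδz]; ring
      have hb := base t
      rw [hQt] at hb
      simp only [Real.exp_zero, mul_zero] at hb
      rw [hQt]
      simpa using hb
    -- existence of partition points
    have hex : ∀ i : ℕ, 1 ≤ i → i ≤ N → ∃ x, x ≤ t ∧ QQ f x = i * δ := by
      intro i hi1 hiN
      rcases eq_or_lt_of_le hiN with rfl | hiN'
      · exact ⟨t, le_rfl, hNδ.symm⟩
      · have hpos : 0 < (i:ℝ) * δ := by positivity
        have hlt : (i:ℝ) * δ ≤ QQ f t := by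
          rw [← hNδ]
          have : (i:ℝ) ≤ N := Nat.cast_le.2 hiN
          nlinarith
        obtain ⟨t', ht'⟩ : ∃ t', QQ f t' < (i:ℝ) * δ := by
          have := (QQ_tendsto_atBot hf).eventually_lt_const hpos
          exact this.exists
        have hmin : min t' t ≤ t := min_le_right _ _
        have hsub := intermediate_value_Icc hmin (QQ_continuous hf).continuousOn
        have hmem : (i:ℝ) * δ ∈ Icc (QQ f (min t' t)) (QQ f t) :=
          ⟨le_trans (hQm (min_le_left _ _)) ht'.le, hlt⟩
        obtain ⟨x, hx, hxval⟩ := hsub hmem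
        exact ⟨x, hx.2, hxval⟩
    -- induction
    have ind : ∀ i : ℕ, 1 ≤ i → i ≤ N → ∀ x, x ≤ t → QQ f x = i * δ →
        ∫ s in Set.Iic x, f s * Real.exp (QQ f s)
          ≤ δ * ∑ j ∈ Finset.range i, Real.exp ((j + 1) * δ) := by
      intro i
      induction i with
      | zero => omega
      | succ n ih =>
        intro _ hiN x hxt hxval
        rcases Nat.eq_zero_or_pos n with rfl | hn
        · -- base case i = 1
          calc ∫ s in Set.Iic x, f s * Real.exp (QQ f s)
              ≤ Real.exp (QQ f x) * QQ f x := base x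
            _ = δ * ∑ j ∈ Finset.range 1, Real.exp ((j + 1) * δ) := by
                rw [hxval, Finset.sum_range_one]; push_cast; norm_num; ring
        · obtain ⟨x', hx't, hx'val⟩ := hex n hn (le_trans (Nat.le_succ n) hiN)
          have hδpos : x' ≤ x := by
            by_contra hc
            push_neg at hc
            have := hQm hc.le
            rw [hxval, hx'val] at this
            push_cast at this
            nlinarith [hδp, this]
          have hsplit : ∫ s in Set.Iic x, f s * Real.exp (QQ f s)
              = (∫ s in Set.Iic x', f s * Real.exp (QQ f s))
                + ∫ s in Set.Ioc x' x, f s * Real.exp (QQ f s) := by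
            rw [← setIntegral_union (Iic_disjoint_Ioc le_rfl) measurableSet_Ioc
              ((expQQ_integrable hf hf0).integrableOn)
              ((expQQ_integrable hf hf0).integrableOn),
              Iic_union_Ioc_eq_Iic hδpos]
          have hstep := step x' x hδpos
          have hIH := ih hn (le_trans (Nat.le_succ n) hiN) x' hx't hx'val
          rw [hsplit]
          have hval : Real.exp (QQ f x) * (QQ f x - QQ f x') = Real.exp ((n + 1) * δ) * δ := by
            rw [hxval, hx'val]; push_cast; ring_nf
          rw [Finset.sum_range_succ]
          calc (∫ s in Set.Iic x', f s * Real.exp (QQ f s))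
                + ∫ s in Set.Ioc x' x, f s * Real.exp (QQ f s)
              ≤ δ * ∑ j ∈ Finset.range n, Real.exp ((j + 1) * δ)
                + Real.exp (QQ f x) * (QQ f x - QQ f x') := add_le_add hIH hstep
            _ = δ * (∑ j ∈ Finset.range n, Real.exp ((j + 1) * δ)
                + Real.exp ((n + 1) * δ)) := by rw [hval]; push_cast; ring
    -- apply with i = N, x = t
    have hfin := ind N hN le_rfl t le_rfl hNδ.symm
    -- geometric sum bound
    have hsum : δ * ∑ j ∈ Finset.range N, Real.exp ((j + 1) * δ)
        ≤ Real.exp δ * (Real.exp ((N:ℝ) * δ) - 1) := by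
      have termwise : ∀ j ∈ Finset.range N, δ * Real.exp (((j:ℝ) + 1) * δ)
          ≤ Real.exp δ * (Real.exp (((j:ℝ) + 1) * δ) - Real.exp ((j:ℝ) * δ)) := by
        intro j _
        have h1 : Real.exp (((j:ℝ) + 1) * δ) = Real.exp ((j:ℝ) * δ) * Real.exp δ := by
          rw [← Real.exp_add]; ring_nf
        rw [h1]
        have h2 : δ ≤ Real.exp δ - 1 := by linarith [Real.add_one_le_exp δ]
        have h3 : 0 < Real.exp ((j:ℝ) * δ) := Real.exp_pos _
        have h4 : 0 < Real.exp δ := Real.exp_pos _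
        nlinarith [mul_nonneg (mul_nonneg (sub_nonneg.2 h2) h3.le) h4.le]
      calc δ * ∑ j ∈ Finset.range N, Real.exp ((j + 1) * δ)
          = ∑ j ∈ Finset.range N, δ * Real.exp (((j:ℝ) + 1) * δ) := by
            rw [Finset.mul_sum]
        _ ≤ ∑ j ∈ Finset.range N, Real.exp δ * (Real.exp (((j:ℝ) + 1) * δ)
              - Real.exp ((j:ℝ) * δ)) := Finset.sum_le_sum termwise
        _ = Real.exp δ * ∑ j ∈ Finset.range N, (Real.exp (((j:ℝ) + 1) * δ)
              - Real.exp ((j:ℝ) * δ)) := by rw [Finset.mul_sum]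
        _ = Real.exp δ * (Real.exp ((N:ℝ) * δ) - 1) := by
            have h := Finset.sum_range_sub (fun j : ℕ => Real.exp ((j:ℝ) * δ)) N
            push_cast at h
            rw [h]
            norm_num
    rw [hNδ] at hsum
    exact le_trans hfin hsum
  -- take N → ∞
  have hlim : Tendsto (fun N : ℕ => Real.exp (QQ f t / N) * (Real.exp (QQ f t) - 1))
      atTop (nhds (Real.exp (QQ f t) - 1)) := by
    have h1 : Tendsto (fun N : ℕ => QQ f t / N) atTop (nhds 0) :=
      tendsto_const_div_atTop_nhds_zero_nat _
    have h2 := (Real.continuous_exp.tendsto 0).comp h1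
    rw [Real.exp_zero] at h2
    simpa using h2.mul_const (Real.exp (QQ f t) - 1)
  refine ge_of_tendsto hlim ?_
  filter_upwards [eventually_ge_atTop 1] with N hN using main N hN

lemma fP_integrable (hf : Integrable f) (hf0 : ∀ t, 0 ≤ f t)
    {P : ℝ → ℝ} (hPm : AEStronglyMeasurable P volume) (hP0 : ∀ t, 0 ≤ P t)
    {C : ℝ} (hPC : ∀ t, P t ≤ C) :
    Integrable (fun s => f s * P s) := by
  have h : Integrable (fun s => P s * f s) :=
    hf.bdd_mul hPm (Eventually.of_forall fun s => by
      rw [Real.norm_eq_abs, _root_.abs_of_nonneg (hP0 s)]; exact hPC s)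
  exact h.congr (Eventually.of_forall fun s => mul_comm _ _)

lemma gronwall_int (hf : Integrable f) (hf0 : ∀ t, 0 ≤ f t)
    {P : ℝ → ℝ} (hPc : Continuous P) (hP0 : ∀ t, 0 ≤ P t)
    {C : ℝ} (hPC : ∀ t, P t ≤ C)
    (hP : ∀ t, P t ≤ QQ f t + ∫ s in Set.Iic t, f s * P s) :
    ∀ t, P t ≤ Real.exp (QQ f t) - 1 := by
  set Qi : ℝ := ∫ s, f s with hQi
  have hQi0 : 0 ≤ Qi := integral_nonneg hf0
  have hC0 : 0 ≤ C := le_trans (hP0 0) (hPC 0)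
  have hfP := fP_integrable hf hf0 hPc.aestronglyMeasurable hP0 hPC
  -- trivial case
  rcases eq_or_lt_of_le hQi0 with hQz | hQp
  · intro t
    have hQt : QQ f t = 0 :=
      le_antisymm (by rw [hQz]; exact QQ_le_total hf hf0 t) (QQ_nonneg hf0 t)
    have h1 : ∫ s in Set.Iic t, f s * P s ≤ ∫ s in Set.Iic t, f s * C := by
      refine setIntegral_mono_on hfP.integrableOn
        (hf.integrableOn.mul_const C) measurableSet_Iic (fun s _ =>
          mul_le_mul_of_nonneg_left (hPC s) (hf0 s))
    have h2 : ∫ s in Set.Iic t, f s * C = QQ f t * C := by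
      rw [integral_mul_const]; rfl
    have := hP t
    rw [hQt] at this h2
    simp only [zero_mul] at h2
    rw [hQt, Real.exp_zero]
    linarith [h1, h2, this]
  · -- main case
    set c : ℝ := Qi / (Real.exp Qi - 1) with hc
    have hden : 0 < Real.exp Qi - 1 := by
      have := Real.add_one_lt_exp (x := Qi) (ne_of_gt hQp)
      linarith
    have hc0 : 0 < c := div_pos hQp hden
    have hc1 : c ≤ 1 := by
      rw [hc, div_le_one hden]
      linarith [Real.add_one_le_exp Qi]
    -- convexity estimate : for 0 ≤ x ≤ Qi, c * (exp x - 1) ≤ x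
    have conv : ∀ x : ℝ, 0 ≤ x → x ≤ Qi → c * (Real.exp x - 1) ≤ x := by
      intro x hx0 hxQ
      have ha : (0:ℝ) ≤ 1 - x / Qi := by
        have := (div_le_one hQp).2 hxQ
        linarith
      have hb : (0:ℝ) ≤ x / Qi := div_nonneg hx0 hQp.le
      have hθ := convexOn_exp.2 (Set.mem_univ (0:ℝ)) (Set.mem_univ Qi) ha hb
        (by ring : (1 - x / Qi) + x / Qi = 1)
      simp only [smul_eq_mul, mul_zero, zero_add, Real.exp_zero, mul_one] at hθ
      have hx' : (1 - x / Qi) * 0 + x / Qi * Qi = x := by field_simp; ring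
      rw [show (x / Qi * Qi) = x by field_simp] at hθ
      have h1 : Real.exp x - 1 ≤ (x / Qi) * (Real.exp Qi - 1) := by nlinarith [hθ]
      have h2 : c * (Real.exp x - 1) ≤ c * ((x / Qi) * (Real.exp Qi - 1)) :=
        mul_le_mul_of_nonneg_left h1 hc0.le
      have h3 : c * ((x / Qi) * (Real.exp Qi - 1)) = x := by
        rw [hc]; field_simp
      linarith [h2, h3]
    -- one improvement step
    have stepS : ∀ lam : ℝ, 1 ≤ lam → (∀ t, P t ≤ lam * (Real.exp (QQ f t) - 1)) →
        ∀ t, P t ≤ (1 + (1 - c) * (lam - 1)) * (Real.exp (QQ f t) - 1) := by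
      intro lam hlam hS t
      have hInt2 : Integrable (fun s => f s * (lam * (Real.exp (QQ f s) - 1))) := by
        have h := ((expQQ_integrable hf hf0).const_mul lam).sub (hf.const_mul lam)
        exact h.congr (Eventually.of_forall fun s => by simp only [Pi.sub_apply]; ring)
      have h1 : ∫ s in Set.Iic t, f s * P s
          ≤ ∫ s in Set.Iic t, f s * (lam * (Real.exp (QQ f s) - 1)) := by
        refine setIntegral_mono_on hfP.integrableOn hInt2.integrableOn
          measurableSet_Iic (fun s _ => mul_le_mul_of_nonneg_left (hS s) (hf0 s))
      have h2 : ∫ s in Set.Iic t, f s * (lam * (Real.exp (QQ f s) - 1))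
          = lam * ((∫ s in Set.Iic t, f s * Real.exp (QQ f s)) - QQ f t) := by
        have e1 : ∀ s : ℝ, f s * (lam * (Real.exp (QQ f s) - 1))
            = lam * (f s * Real.exp (QQ f s)) - lam * f s := fun s => by ring
        rw [integral_congr_ae (Eventually.of_forall fun s => e1 s),
          integral_sub ((expQQ_integrable hf hf0).integrableOn.const_mul lam)
            (hf.integrableOn.const_mul lam),
          integral_const_mul, integral_const_mul]
        rw [QQ]
        ring
      have h3 := key_exp_integral hf hf0 t
      have h4 : c * (Real.exp (QQ f t) - 1) ≤ QQ f t :=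
        conv (QQ f t) (QQ_nonneg hf0 t) (QQ_le_total hf hf0 t)
      have h5 := hP t
      have hlam0 : 0 ≤ lam := by linarith
      have hE0 : 0 ≤ Real.exp (QQ f t) - 1 := by
        have := Real.add_one_le_exp (QQ f t)
        have := QQ_nonneg hf0 t
        linarith
      have h6 : P t ≤ QQ f t + lam * ((Real.exp (QQ f t) - 1) - QQ f t) := by
        have := mul_le_mul_of_nonneg_left (sub_le_sub_right h3 (QQ f t)) hlam0
        linarith [h1, h2.le, h5]
      nlinarith [mul_le_mul_of_nonneg_left h4 (by linarith : (0:ℝ) ≤ lam - 1)]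
    -- iterate
    have iter : ∀ n : ℕ, ∀ t, P t ≤ (1 + (1 - c) ^ n * C) * (Real.exp (QQ f t) - 1) := by
      intro n
      induction n with
      | zero =>
        intro t
        have h1 : ∫ s in Set.Iic t, f s * P s ≤ ∫ s in Set.Iic t, f s * C :=
          setIntegral_mono_on hfP.integrableOn (hf.integrableOn.mul_const C)
            measurableSet_Iic (fun s _ => mul_le_mul_of_nonneg_left (hPC s) (hf0 s))
        have h2 : ∫ s in Set.Iic t, f s * C = QQ f t * C := by
          rw [integral_mul_const]; rfl
        have h3 : QQ f t ≤ Real.exp (QQ f t) - 1 := by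
          linarith [Real.add_one_le_exp (QQ f t)]
        have h5 := hP t
        have : P t ≤ (1 + C) * QQ f t := by
          rw [h2] at h1; nlinarith
        calc P t ≤ (1 + C) * QQ f t := this
          _ ≤ (1 + C) * (Real.exp (QQ f t) - 1) :=
              mul_le_mul_of_nonneg_left h3 (by linarith)
          _ = (1 + (1 - c) ^ 0 * C) * (Real.exp (QQ f t) - 1) := by norm_num
      | succ n ih =>
        have hlam : 1 ≤ 1 + (1 - c) ^ n * C := by
          have : (0:ℝ) ≤ (1 - c) ^ n := pow_nonneg (by linarith) n
          nlinarith
        have := stepS _ hlam ih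
        intro t
        have h := this t
        have : (1 + (1 - c) * (1 + (1 - c) ^ n * C - 1)) = 1 + (1 - c) ^ (n + 1) * C := by
          ring
        rwa [this] at h
    -- limit
    intro t
    have hlim : Tendsto (fun n : ℕ => (1 + (1 - c) ^ n * C) * (Real.exp (QQ f t) - 1))
        atTop (nhds (Real.exp (QQ f t) - 1)) := by
      have h1 : Tendsto (fun n : ℕ => (1 - c) ^ n) atTop (nhds 0) :=
        tendsto_pow_atTop_nhds_zero_of_lt_one (by linarith) (by linarith)
      have h2 := ((h1.mul_const C).const_add 1).mul_const (Real.exp (QQ f t) - 1)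
      simpa using h2
    exact ge_of_tendsto hlim (Eventually.of_forall fun n => iter n t)

lemma cexp_hasDerivAt (c : ℂ) (t : ℝ) :
    HasDerivAt (fun s : ℝ => Complex.exp (c * s)) (c * Complex.exp (c * t)) t := by
  have h1 : HasDerivAt (fun s : ℝ => (s : ℂ)) 1 t := Complex.ofRealCLM.hasDerivAt
  have h2 := (h1.const_mul c).cexp
  simpa [mul_comm] using h2

lemma abs_cexp (c : ℂ) (t : ℝ) :
    ‖Complex.exp (c * t)‖ = Real.exp (c.re * t) := by
  rw [Complex.norm_exp]
  congr 1
  simp [Complex.mul_re]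

lemma bounded_of_tendsto {u : ℝ → ℂ} (hc : Continuous u) {l1 l2 : ℂ}
    (h1 : Tendsto u atBot (nhds l1)) (h2 : Tendsto u atTop (nhds l2)) :
    ∃ B : ℝ, 1 ≤ B ∧ ∀ t, ‖u t‖ ≤ B := by
  have e1 : ∀ᶠ t in atBot, ‖u t‖ ≤ ‖l1‖ + 1 := by
    have := (continuous_norm.tendsto l1).comp h1
    exact this.eventually_le_const (lt_add_one _)
  have e2 : ∀ᶠ t in atTop, ‖u t‖ ≤ ‖l2‖ + 1 := by
    have := (continuous_norm.tendsto l2).comp h2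
    exact this.eventually_le_const (lt_add_one _)
  obtain ⟨t0, ht0⟩ := eventually_atBot.1 e1
  obtain ⟨t1, ht1⟩ := eventually_atTop.1 e2
  have hcomp : IsCompact (Set.Icc t0 t1) := isCompact_Icc
  have hbdd : BddAbove ((fun t => ‖u t‖) '' Set.Icc t0 t1) :=
    (hcomp.image (continuous_norm.comp hc)).bddAbove
  obtain ⟨M, hM⟩ := hbdd
  refine ⟨max 1 (max (‖l1‖ + 1) (max (‖l2‖ + 1) M)), le_max_left _ _, ?_⟩
  intro t
  rcases le_total t t0 with h | h
  · exact (ht0 t h).trans (le_max_of_le_right (le_max_left _ _))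
  rcases le_total t1 t with h' | h'
  · exact (ht1 t h').trans (le_max_of_le_right (le_max_of_le_right (le_max_left _ _)))
  · have hmem : ‖u t‖ ∈ (fun t => ‖u t‖) '' Set.Icc t0 t1 :=
      Set.mem_image_of_mem _ (Set.mem_Icc.2 ⟨h, h'⟩)
    exact (hM hmem).trans (le_max_of_le_right (le_max_of_le_right (le_max_right _ _)))

lemma jost_per_zeta (q : ℝ → ℂ) (hq1 : Integrable q) (a : ℂ → ℂ) (ζ : ℂ) (hζ : 0 ≤ ζ.im)
    (hJ : IsZSJostCoeff q a ζ) :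
    ‖a ζ - 1‖ ≤ Real.exp (∫ t, ‖q t‖) - 1 ∧
    ∀ δ : ℝ, 0 < δ →
      ‖a ζ - 1‖ ≤ Real.exp (∫ t, ‖q t‖) *
        ((∫ t, ‖q t‖ * (QQ (fun s => ‖q s‖) t
            - QQ (fun s => ‖q s‖) (t - δ)))
          + Real.exp (-(2 * ζ.im * δ)) * (∫ t, ‖q t‖) ^ 2) := by
  obtain ⟨ψ, hd1, hd2, hbot1, hbot2, htop⟩ := hJ
  set f : ℝ → ℝ := fun t => ‖q t‖ with hfdef
  have hf : Integrable f := by simpa [hfdef] using hq1.norm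
  have hf0 : ∀ t, 0 ≤ f t := fun t => norm_nonneg _
  set Qi : ℝ := ∫ s, f s with hQidef
  have hQi0 : 0 ≤ Qi := integral_nonneg hf0
  set u : ℝ → ℂ := fun t => (ψ t).1 * Complex.exp (Complex.I * ζ * t) with hudef
  set v : ℝ → ℂ := fun t => (ψ t).2 * Complex.exp (Complex.I * ζ * t) with hvdef
  set w : ℝ → ℂ := fun t => (ψ t).2 * Complex.exp (-Complex.I * ζ * t) with hwdef
  set g : ℝ → ℂ := fun s => (starRingEnd ℂ) (q s) * (ψ s).1 * Complex.exp (-Complex.I * ζ * s)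
    with hgdef
  have hψ1c : Continuous (fun t => (ψ t).1) :=
    continuous_iff_continuousAt.2 fun t => (hd1 t).continuousAt
  have hψ2c : Continuous (fun t => (ψ t).2) :=
    continuous_iff_continuousAt.2 fun t => (hd2 t).continuousAt
  have hFc : Continuous (fun t : ℝ => Complex.exp (Complex.I * ζ * t)) :=
    Complex.continuous_exp.comp (continuous_const.mul Complex.continuous_ofReal)
  have hFc' : Continuous (fun t : ℝ => Complex.exp (-Complex.I * ζ * t)) :=
    Complex.continuous_exp.comp (continuous_const.mul Complex.continuous_ofReal)
  have huc : Continuous u := hψ1c.mul hFc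
  have hvc : Continuous v := hψ2c.mul hFc
  have hu' : ∀ t, HasDerivAt u (q t * v t) t := by
    intro t
    have h := (hd1 t).mul (cexp_hasDerivAt (Complex.I * ζ) t)
    have he : (q t * (ψ t).2 - Complex.I * ζ * (ψ t).1) * Complex.exp (Complex.I * ζ * t)
        + (ψ t).1 * (Complex.I * ζ * Complex.exp (Complex.I * ζ * t)) = q t * v t := by
      simp only [hvdef]; ring
    rw [← he]; exact h
  have hw' : ∀ t, HasDerivAt w (g t) t := by
    intro t
    have h := (hd2 t).mul (cexp_hasDerivAt (-Complex.I * ζ) t)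
    have he : ((starRingEnd ℂ) (q t) * (ψ t).1 + Complex.I * ζ * (ψ t).2)
          * Complex.exp (-Complex.I * ζ * t)
        + (ψ t).2 * (-Complex.I * ζ * Complex.exp (-Complex.I * ζ * t)) = g t := by
      simp only [hgdef]; ring
    rw [← he]; exact h
  obtain ⟨B, hB1, hBu⟩ := bounded_of_tendsto huc hbot1 htop
  have hB0 : (0:ℝ) ≤ B := le_trans zero_le_one hB1
  -- absolute values
  have habs_u : ∀ s : ℝ, ‖(ψ s).1‖ = ‖u s‖ * Real.exp (ζ.im * s) := by
    intro s
    have h1 : ‖u s‖ = ‖(ψ s).1‖ * Real.exp (-(ζ.im * s)) := by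
      rw [hudef]
      simp only [norm_mul, abs_cexp]
      congr 2
      simp [Complex.mul_re]
    rw [h1, mul_assoc, ← Real.exp_add]
    simp
  have hgabs : ∀ s : ℝ, ‖g s‖
      = f s * ‖u s‖ * Real.exp (2 * ζ.im * s) := by
    intro s
    rw [hgdef]
    simp only [norm_mul, abs_cexp, Complex.norm_conj, habs_u]
    have hre : (-Complex.I * ζ).re = ζ.im := by simp [Complex.mul_re]
    rw [hre]
    have hee : Real.exp (ζ.im * s) * Real.exp (ζ.im * s) = Real.exp (2 * ζ.im * s) := by
      rw [← Real.exp_add]; ring_nf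
    rw [show ‖q s‖ = f s from rfl, ← hee]
    ring
  -- integrability of g on Iic t
  have hgmeas : AEStronglyMeasurable g volume := by
    exact ((Complex.continuous_conj.comp_aestronglyMeasurable hq1.aestronglyMeasurable).mul
      hψ1c.aestronglyMeasurable).mul hFc'.aestronglyMeasurable
  have hgint : ∀ t : ℝ, IntegrableOn g (Set.Iic t) := by
    intro t
    refine Integrable.mono' ((hf.integrableOn).mul_const (B * Real.exp (2 * ζ.im * t)))
      hgmeas.restrict ?_
    refine (ae_restrict_iff' measurableSet_Iic).2 (Eventually.of_forall fun s hs => ?_)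
    rw [hgabs]
    have h1 : ‖u s‖ ≤ B := hBu s
    have h2 : Real.exp (2 * ζ.im * s) ≤ Real.exp (2 * ζ.im * t) := by
      apply Real.exp_le_exp.2
      have : (s:ℝ) ≤ t := hs
      nlinarith
    calc f s * ‖u s‖ * Real.exp (2 * ζ.im * s)
        ≤ f s * B * Real.exp (2 * ζ.im * t) := by
          apply mul_le_mul (mul_le_mul_of_nonneg_left h1 (hf0 s)) h2 (Real.exp_pos _).le
          positivity
      _ = f s * (B * Real.exp (2 * ζ.im * t)) := by ring
  -- representation of w
  have hwrep : ∀ t : ℝ, w t = ∫ s in Set.Iic t, g s := by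
    intro t
    have hFTC : ∀ r : ℝ, ∫ s in r..t, g s = w t - w r := by
      intro r
      apply intervalIntegral.integral_eq_sub_of_hasDerivAt (fun x _ => hw' x)
      apply intervalIntegrable_iff.2
      apply (hgint (max r t)).mono_set
      rw [Set.uIoc]
      exact Set.Ioc_subset_Iic_self
    have h1 : Tendsto (fun r => ∫ s in r..t, g s) atBot (nhds (∫ s in Set.Iic t, g s)) :=
      intervalIntegral_tendsto_integral_Iic t (hgint t) tendsto_id
    have h2 : Tendsto (fun r => w t - w r) atBot (nhds (w t - 0)) :=
      tendsto_const_nhds.sub hbot2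
    rw [sub_zero] at h2
    have h3 : Tendsto (fun r => w t - w r) atBot (nhds (∫ s in Set.Iic t, g s)) :=
      h1.congr (fun r => hFTC r)
    exact (tendsto_nhds_unique h3 h2).symm
  -- |v t| in terms of w
  have hv_abs : ∀ t : ℝ, ‖v t‖
      = Real.exp (-(2 * ζ.im * t)) * ‖w t‖ := by
    intro t
    have h1 : v t = Complex.exp (Complex.I * ζ * t) * Complex.exp (Complex.I * ζ * t) * w t := by
      rw [hvdef, hwdef]
      have h2 : Complex.exp (Complex.I * ζ * t) * Complex.exp (-Complex.I * ζ * t) = 1 := by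
        rw [← Complex.exp_add, show Complex.I * ζ * (t:ℂ) + -Complex.I * ζ * t = 0 by ring,
          Complex.exp_zero]
      calc (ψ t).2 * Complex.exp (Complex.I * ζ * t)
          = (ψ t).2 * Complex.exp (Complex.I * ζ * t) * 1 := by ring
        _ = Complex.exp (Complex.I * ζ * t) * Complex.exp (Complex.I * ζ * t)
            * ((ψ t).2 * Complex.exp (-Complex.I * ζ * t)) := by rw [← h2]; ring
    rw [h1]
    simp only [norm_mul, abs_cexp]
    have hre : (Complex.I * ζ).re = -ζ.im := by simp [Complex.mul_re]
    rw [hre, ← Real.exp_add]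
    congr 2
    ring
  -- J bound
  have hJint : ∀ t : ℝ, IntegrableOn
      (fun s => f s * ‖u s‖ * Real.exp (2 * ζ.im * s)) (Set.Iic t) := by
    intro t
    refine ((hgint t).norm).congr (Eventually.of_forall fun s => ?_)
    simp only [hgabs]
  have habs_w : ∀ t : ℝ, ‖w t‖
      ≤ ∫ s in Set.Iic t, f s * ‖u s‖ * Real.exp (2 * ζ.im * s) := by
    intro t
    rw [hwrep t]
    refine le_trans (norm_integral_le_integral_norm g) (le_of_eq ?_)
    refine integral_congr_ae (Eventually.of_forall fun s => ?_)
    simp only [hgabs]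
  -- key v bound
  have hfu_int : Integrable (fun s => f s * ‖u s‖) := by
    have hb : ∀ s : ℝ, ‖‖u s‖‖ ≤ B := fun s => by
      rw [Real.norm_eq_abs, _root_.abs_of_nonneg (norm_nonneg _)]
      exact hBu s
    have h := hf.bdd_mul (continuous_norm.comp huc).aestronglyMeasurable (Eventually.of_forall hb)
    exact h.congr (Eventually.of_forall fun s => mul_comm _ _)
  have hv_key : ∀ B' : ℝ, 0 ≤ B' → (∀ s, ‖u s‖ ≤ B') → ∀ t r : ℝ, r ≤ t →
      ‖v t‖ ≤ B' * ((QQ f t - QQ f r)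
        + Real.exp (-(2 * ζ.im * (t - r))) * QQ f r) := by
    intro B' hB'0 hB' t r hrt
    have hsplit : ∫ s in Set.Iic t, f s * ‖u s‖ * Real.exp (2 * ζ.im * s)
        = (∫ s in Set.Iic r, f s * ‖u s‖ * Real.exp (2 * ζ.im * s))
          + ∫ s in Set.Ioc r t, f s * ‖u s‖ * Real.exp (2 * ζ.im * s) := by
      rw [← setIntegral_union (Set.Iic_disjoint_Ioc le_rfl) measurableSet_Ioc
        ((hJint t).mono_set (Set.Iic_subset_Iic.2 hrt))
        ((hJint t).mono_set Set.Ioc_subset_Iic_self),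
        Set.Iic_union_Ioc_eq_Iic hrt]
    have hb1 : ∫ s in Set.Iic r, f s * ‖u s‖ * Real.exp (2 * ζ.im * s)
        ≤ QQ f r * (B' * Real.exp (2 * ζ.im * r)) := by
      refine le_trans (setIntegral_mono_on ((hJint t).mono_set (Set.Iic_subset_Iic.2 hrt))
        ((hf.integrableOn).mul_const (B' * Real.exp (2 * ζ.im * r))) measurableSet_Iic
        (fun s hs => ?_)) (le_of_eq ?_)
      · have h2 : Real.exp (2 * ζ.im * s) ≤ Real.exp (2 * ζ.im * r) := by
          apply Real.exp_le_exp.2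
          have hsr : (s:ℝ) ≤ r := hs
          nlinarith
        calc f s * ‖u s‖ * Real.exp (2 * ζ.im * s)
            ≤ f s * B' * Real.exp (2 * ζ.im * r) := by
              apply mul_le_mul (mul_le_mul_of_nonneg_left (hB' s) (hf0 s)) h2
                (Real.exp_pos _).le
              positivity
          _ = f s * (B' * Real.exp (2 * ζ.im * r)) := by ring
      · rw [integral_mul_const]; rfl
    have hb2 : ∫ s in Set.Ioc r t, f s * ‖u s‖ * Real.exp (2 * ζ.im * s)
        ≤ (QQ f t - QQ f r) * (B' * Real.exp (2 * ζ.im * t)) := by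
      refine le_trans (setIntegral_mono_on ((hJint t).mono_set Set.Ioc_subset_Iic_self)
        ((hf.integrableOn).mul_const (B' * Real.exp (2 * ζ.im * t))) measurableSet_Ioc
        (fun s hs => ?_)) (le_of_eq ?_)
      · have h2 : Real.exp (2 * ζ.im * s) ≤ Real.exp (2 * ζ.im * t) := by
          apply Real.exp_le_exp.2
          have hst : (s:ℝ) ≤ t := hs.2
          nlinarith
        calc f s * ‖u s‖ * Real.exp (2 * ζ.im * s)
            ≤ f s * B' * Real.exp (2 * ζ.im * t) := by
              apply mul_le_mul (mul_le_mul_of_nonneg_left (hB' s) (hf0 s)) h2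
                (Real.exp_pos _).le
              positivity
          _ = f s * (B' * Real.exp (2 * ζ.im * t)) := by ring
      · rw [integral_mul_const, QQ_diff hf hrt]
    have hc1 : Real.exp (-(2 * ζ.im * t)) * Real.exp (2 * ζ.im * r)
        = Real.exp (-(2 * ζ.im * (t - r))) := by
      rw [← Real.exp_add]; congr 1; ring
    have hc2 : Real.exp (-(2 * ζ.im * t)) * Real.exp (2 * ζ.im * t) = 1 := by
      rw [← Real.exp_add]; simp
    calc ‖v t‖ = Real.exp (-(2 * ζ.im * t)) * ‖w t‖ := hv_abs t
      _ ≤ Real.exp (-(2 * ζ.im * t)) * (QQ f r * (B' * Real.exp (2 * ζ.im * r))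
            + (QQ f t - QQ f r) * (B' * Real.exp (2 * ζ.im * t))) := by
          refine mul_le_mul_of_nonneg_left ?_ (Real.exp_pos _).le
          refine le_trans (habs_w t) (le_trans (le_of_eq hsplit) (add_le_add hb1 hb2))
      _ = B' * ((QQ f t - QQ f r) + Real.exp (-(2 * ζ.im * (t - r))) * QQ f r) := by
          rw [mul_add,
            show Real.exp (-(2 * ζ.im * t)) * (QQ f r * (B' * Real.exp (2 * ζ.im * r)))
              = (Real.exp (-(2 * ζ.im * t)) * Real.exp (2 * ζ.im * r)) * (QQ f r * B') by ring,
            show Real.exp (-(2 * ζ.im * t)) * ((QQ f t - QQ f r)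
                * (B' * Real.exp (2 * ζ.im * t)))
              = (Real.exp (-(2 * ζ.im * t)) * Real.exp (2 * ζ.im * t))
                * ((QQ f t - QQ f r) * B') by ring,
            hc1, hc2]
          ring
  -- uniform bound on v
  have hv_le : ∀ s : ℝ, ‖v s‖ ≤ B * Qi := by
    intro s
    have h := hv_key B hB0 hBu s s le_rfl
    have he : (QQ f s - QQ f s) + Real.exp (-(2 * ζ.im * (s - s))) * QQ f s = QQ f s := by
      rw [show s - s = (0:ℝ) by ring]
      simp
    rw [he] at h
    exact h.trans (mul_le_mul_of_nonneg_left (QQ_le_total hf hf0 s) hB0)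
  -- second v bound
  have hv_bd2 : ∀ t : ℝ, ‖v t‖ ≤ ∫ s in Set.Iic t, f s * ‖u s‖ := by
    intro t
    have h1 : ∫ s in Set.Iic t, f s * ‖u s‖ * Real.exp (2 * ζ.im * s)
        ≤ ∫ s in Set.Iic t, f s * ‖u s‖ * Real.exp (2 * ζ.im * t) := by
      refine setIntegral_mono_on (hJint t) (hfu_int.integrableOn.mul_const _)
        measurableSet_Iic (fun s hs => ?_)
      have h2 : Real.exp (2 * ζ.im * s) ≤ Real.exp (2 * ζ.im * t) := by
        apply Real.exp_le_exp.2
        have hst : (s:ℝ) ≤ t := hs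
        nlinarith
      exact mul_le_mul_of_nonneg_left h2 (mul_nonneg (hf0 s) (norm_nonneg _))
    rw [integral_mul_const] at h1
    have h5 : Real.exp (-(2 * ζ.im * t)) * Real.exp (2 * ζ.im * t) = 1 := by
      rw [← Real.exp_add]; simp
    calc ‖v t‖ = Real.exp (-(2 * ζ.im * t)) * ‖w t‖ := hv_abs t
      _ ≤ Real.exp (-(2 * ζ.im * t))
          * ((∫ s in Set.Iic t, f s * ‖u s‖) * Real.exp (2 * ζ.im * t)) :=
            mul_le_mul_of_nonneg_left ((habs_w t).trans h1) (Real.exp_pos _).le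
      _ = (Real.exp (-(2 * ζ.im * t)) * Real.exp (2 * ζ.im * t))
          * ∫ s in Set.Iic t, f s * ‖u s‖ := by ring
      _ = _ := by rw [h5]; ring
  -- representation of u
  have hqv_int : Integrable (fun s => q s * v s) := by
    refine Integrable.mono' (hf.mul_const (B * Qi))
      (hq1.aestronglyMeasurable.mul hvc.aestronglyMeasurable)
      (Eventually.of_forall fun s => ?_)
    rw [norm_mul]
    exact mul_le_mul_of_nonneg_left (hv_le s) (hf0 s)
  have hurep : ∀ t : ℝ, u t = 1 + ∫ s in Set.Iic t, q s * v s := by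
    intro t
    have hFTC : ∀ r : ℝ, ∫ s in r..t, q s * v s = u t - u r := fun r =>
      intervalIntegral.integral_eq_sub_of_hasDerivAt (fun x _ => hu' x)
        hqv_int.intervalIntegrable
    have h1 : Tendsto (fun r => ∫ s in r..t, q s * v s) atBot
        (nhds (∫ s in Set.Iic t, q s * v s)) :=
      intervalIntegral_tendsto_integral_Iic t hqv_int.integrableOn tendsto_id
    have h2 : Tendsto (fun r => u t - u r) atBot (nhds (u t - 1)) :=
      tendsto_const_nhds.sub hbot1
    have h3 := tendsto_nhds_unique (h1.congr fun r => hFTC r) h2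
    rw [h3]; ring
  have hfv_int : Integrable (fun s => f s * ‖v s‖) := by
    have hb : ∀ s : ℝ, ‖‖v s‖‖ ≤ B * Qi := fun s => by
      rw [Real.norm_eq_abs, _root_.abs_of_nonneg (norm_nonneg _)]
      exact hv_le s
    have h := hf.bdd_mul (continuous_norm.comp hvc).aestronglyMeasurable (Eventually.of_forall hb)
    exact h.congr (Eventually.of_forall fun s => mul_comm _ _)
  have hfu1_int : Integrable (fun s => f s * ‖u s - 1‖) := by
    have htri2 : ∀ s : ℝ, ‖u s - 1‖ ≤ B + 1 := by
      intro s
      have h1 : ‖u s - 1‖ ≤ ‖u s‖ + 1 := by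
        simpa using norm_sub_le (u s) 1
      linarith [hBu s]
    have hb : ∀ s : ℝ, ‖‖u s - 1‖‖ ≤ B + 1 := fun s => by
      rw [Real.norm_eq_abs, _root_.abs_of_nonneg (norm_nonneg _)]
      exact htri2 s
    have h := hf.bdd_mul
      (continuous_norm.comp (huc.sub continuous_const)).aestronglyMeasurable
      (Eventually.of_forall hb)
    exact h.congr (Eventually.of_forall fun s => mul_comm _ _)
  have hu1_bd : ∀ t : ℝ, ‖u t - 1‖
      ≤ ∫ s in Set.Iic t, f s * ‖v s‖ := by
    intro t
    rw [hurep t, add_sub_cancel_left]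
    refine le_trans (norm_integral_le_integral_norm _)
      (le_of_eq (integral_congr_ae (Eventually.of_forall fun s => ?_)))
    simp only [norm_mul]; rfl
  -- triangle helper
  have htri : ∀ z : ℂ, ‖z‖ ≤ 1 + ‖z - 1‖ := by
    intro z
    calc ‖z‖ = ‖1 + (z - 1)‖ := by ring_nf
      _ ≤ ‖(1:ℂ)‖ + ‖z - 1‖ := norm_add_le _ _
      _ = 1 + ‖z - 1‖ := by rw [norm_one]
  -- Gronwall setup
  set P : ℝ → ℝ := fun t => ‖u t - 1‖ + ‖v t‖ with hPdef
  have hPc : Continuous P :=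
    (continuous_norm.comp (huc.sub continuous_const)).add
      (continuous_norm.comp hvc)
  have hP0 : ∀ t, 0 ≤ P t := fun t => add_nonneg (norm_nonneg _) (norm_nonneg _)
  have hPC : ∀ t, P t ≤ (B + 1) + B * Qi := by
    intro t
    refine add_le_add ?_ (hv_le t)
    have h1 : ‖u t - 1‖ ≤ ‖u t‖ + 1 := by
      simpa using norm_sub_le (u t) 1
    linarith [hBu t]
  have hPineq : ∀ t, P t ≤ QQ f t + ∫ s in Set.Iic t, f s * P s := by
    intro t
    have hA : ‖u t - 1‖ ≤ ∫ s in Set.Iic t, f s * ‖v s‖ := hu1_bd t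
    have hB2 : ‖v t‖
        ≤ QQ f t + ∫ s in Set.Iic t, f s * ‖u s - 1‖ := by
      refine le_trans (hv_bd2 t) ?_
      have hptw : ∀ s ∈ Set.Iic t, f s * ‖u s‖
          ≤ f s + f s * ‖u s - 1‖ := by
        intro s _
        have h := htri (u s)
        nlinarith [hf0 s]
      have hadd : Integrable (fun s => f s + f s * ‖u s - 1‖) :=
        (hf.add hfu1_int).congr (Eventually.of_forall fun s => rfl)
      calc ∫ s in Set.Iic t, f s * ‖u s‖
          ≤ ∫ s in Set.Iic t, (f s + f s * ‖u s - 1‖) :=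
            setIntegral_mono_on hfu_int.integrableOn hadd.integrableOn
              measurableSet_Iic hptw
        _ = QQ f t + ∫ s in Set.Iic t, f s * ‖u s - 1‖ := by
            rw [integral_add hf.integrableOn hfu1_int.integrableOn]; rfl
    have hcomb : (∫ s in Set.Iic t, f s * ‖v s‖)
        + ∫ s in Set.Iic t, f s * ‖u s - 1‖
        = ∫ s in Set.Iic t, f s * P s := by
      rw [← integral_add hfv_int.integrableOn hfu1_int.integrableOn]
      refine integral_congr_ae (Eventually.of_forall fun s => ?_)
      simp only [hPdef]
      ring
    calc P t ≤ (∫ s in Set.Iic t, f s * ‖v s‖)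
        + (QQ f t + ∫ s in Set.Iic t, f s * ‖u s - 1‖) := add_le_add hA hB2
      _ = QQ f t + ∫ s in Set.Iic t, f s * P s := by rw [← hcomb]; ring
  have hgron := gronwall_int hf hf0 hPc hP0 hPC hPineq
  have h_ev : ∀ t, ‖u t - 1‖ ≤ Real.exp Qi - 1 := by
    intro t
    have h1 : ‖u t - 1‖ ≤ P t := le_add_of_nonneg_right (norm_nonneg _)
    have h2 : Real.exp (QQ f t) - 1 ≤ Real.exp Qi - 1 :=
      sub_le_sub_right (Real.exp_le_exp.2 (QQ_le_total hf hf0 t)) 1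
    linarith [hgron t]
  have htendabs : Tendsto (fun t => ‖u t - 1‖) atTop
      (nhds (‖a ζ - 1‖)) :=
    (continuous_norm.tendsto _).comp (htop.sub tendsto_const_nhds)
  constructor
  · exact le_of_tendsto htendabs (Eventually.of_forall h_ev)
  · intro δ hδ
    have hK0 : (0:ℝ) ≤ Real.exp (-(2 * ζ.im * δ)) := (Real.exp_pos _).le
    have hE0 : (0:ℝ) ≤ Real.exp Qi := (Real.exp_pos _).le
    have hEu : ∀ s, ‖u s‖ ≤ Real.exp Qi := by
      intro s
      have h1 := htri (u s)
      linarith [h_ev s]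
    have hvδ : ∀ s : ℝ, ‖v s‖
        ≤ Real.exp Qi * ((QQ f s - QQ f (s - δ)) + Real.exp (-(2 * ζ.im * δ)) * Qi) := by
      intro s
      have h := hv_key (Real.exp Qi) hE0 hEu s (s - δ) (by linarith)
      have hss : s - (s - δ) = δ := by ring
      rw [hss] at h
      refine h.trans (mul_le_mul_of_nonneg_left (add_le_add_right ?_ _) hE0)
      exact mul_le_mul_of_nonneg_left (QQ_le_total hf hf0 _) hK0
    have hD_cont : Continuous (fun s : ℝ => QQ f s - QQ f (s - δ)) :=
      (QQ_continuous hf).sub ((QQ_continuous hf).comp (continuous_id.sub continuous_const))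
    have hD0 : ∀ s : ℝ, 0 ≤ QQ f s - QQ f (s - δ) :=
      fun s => sub_nonneg.2 (QQ_mono hf hf0 (by linarith))
    have hDle : ∀ s : ℝ, QQ f s - QQ f (s - δ) ≤ Qi := by
      intro s
      have h1 := QQ_le_total hf hf0 s
      have h2 := QQ_nonneg hf0 (s - δ)
      linarith
    have hfD_int : Integrable (fun s => f s * (QQ f s - QQ f (s - δ))) := by
      have hb : ∀ s : ℝ, ‖QQ f s - QQ f (s - δ)‖ ≤ Qi := fun s => by
        rw [Real.norm_eq_abs, _root_.abs_of_nonneg (hD0 s)]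
        exact hDle s
      have h := hf.bdd_mul hD_cont.aestronglyMeasurable (Eventually.of_forall hb)
      exact h.congr (Eventually.of_forall fun s => mul_comm _ _)
    have hbound_int : Integrable (fun s => f s * (Real.exp Qi
        * ((QQ f s - QQ f (s - δ)) + Real.exp (-(2 * ζ.im * δ)) * Qi))) := by
      have h := (hfD_int.const_mul (Real.exp Qi)).add
        (hf.const_mul (Real.exp Qi * Real.exp (-(2 * ζ.im * δ)) * Qi))
      exact h.congr (Eventually.of_forall fun s => by
        simp only [Pi.add_apply]; ring)
    have hu1_bd2 : ∀ t : ℝ, ‖u t - 1‖ ≤ Real.exp Qi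
        * ((∫ s, f s * (QQ f s - QQ f (s - δ))) + Real.exp (-(2 * ζ.im * δ)) * Qi ^ 2) := by
      intro t
      refine (hu1_bd t).trans ?_
      have step1 : ∫ s in Set.Iic t, f s * ‖v s‖
          ≤ ∫ s in Set.Iic t, f s * (Real.exp Qi
            * ((QQ f s - QQ f (s - δ)) + Real.exp (-(2 * ζ.im * δ)) * Qi)) :=
        setIntegral_mono_on hfv_int.integrableOn hbound_int.integrableOn measurableSet_Iic
          (fun s _ => mul_le_mul_of_nonneg_left (hvδ s) (hf0 s))
      have step2 : ∫ s in Set.Iic t, f s * (Real.exp Qi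
            * ((QQ f s - QQ f (s - δ)) + Real.exp (-(2 * ζ.im * δ)) * Qi))
          ≤ ∫ s, f s * (Real.exp Qi
            * ((QQ f s - QQ f (s - δ)) + Real.exp (-(2 * ζ.im * δ)) * Qi)) :=
        setIntegral_le_integral hbound_int (Eventually.of_forall fun s =>
          mul_nonneg (hf0 s) (mul_nonneg hE0 (add_nonneg (hD0 s)
            (mul_nonneg hK0 hQi0))))
      have step3 : ∫ s, f s * (Real.exp Qi
            * ((QQ f s - QQ f (s - δ)) + Real.exp (-(2 * ζ.im * δ)) * Qi))
          = Real.exp Qi * ((∫ s, f s * (QQ f s - QQ f (s - δ)))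
            + Real.exp (-(2 * ζ.im * δ)) * Qi ^ 2) := by
        have hsplit2 : ∀ s : ℝ, f s * (Real.exp Qi
              * ((QQ f s - QQ f (s - δ)) + Real.exp (-(2 * ζ.im * δ)) * Qi))
            = Real.exp Qi * (f s * (QQ f s - QQ f (s - δ)))
              + (Real.exp Qi * Real.exp (-(2 * ζ.im * δ)) * Qi) * f s := fun s => by ring
        rw [integral_congr_ae (Eventually.of_forall hsplit2),
          integral_add (hfD_int.const_mul _) (hf.const_mul _),
          integral_const_mul, integral_const_mul, ← hQidef]
        ring
      exact le_trans step1 (le_trans step2 (le_of_eq step3))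
    exact le_of_tendsto htendabs (Eventually.of_forall hu1_bd2)

/-- For `q ∈ L¹(ℝ)`, the Jost coefficient satisfies `|a(ζ) - 1| ≤ e^{‖q‖₁} - 1`
on the closed upper half-plane, `a(ζ) → 1` uniformly as `Im ζ → +∞`, and
consequently all zeros of `a` in the upper half-plane lie in a bounded strip
`0 < Im ζ ≤ U`. -/
theorem zs_jost_bound_and_zero_strip
    (q : ℝ → ℂ) (hq1 : Integrable q)
    (a : ℂ → ℂ)
    (hJost : ∀ ζ : ℂ, 0 ≤ ζ.im → IsZSJostCoeff q a ζ) :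
    (∀ ζ : ℂ, 0 ≤ ζ.im →
        ‖a ζ - 1‖ ≤ Real.exp (∫ t : ℝ, ‖q t‖) - 1) ∧
      (∀ ε : ℝ, 0 < ε → ∃ Y : ℝ, ∀ ζ : ℂ, Y ≤ ζ.im →
        ‖a ζ - 1‖ < ε) ∧
      (∃ U : ℝ, 0 < U ∧ ∀ ζ : ℂ, 0 < ζ.im → a ζ = 0 → ζ.im ≤ U) := by
  set f : ℝ → ℝ := fun t => ‖q t‖ with hfdef
  have hf : Integrable f := by simpa [hfdef] using hq1.norm
  have hf0 : ∀ t, 0 ≤ f t := fun t => norm_nonneg _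
  have hQi0 : (0:ℝ) ≤ ∫ s, f s := integral_nonneg hf0
  have hper := fun (ζ : ℂ) (h : 0 ≤ ζ.im) => jost_per_zeta q hq1 a ζ h (hJost ζ h)
  have hpart2 : ∀ ε : ℝ, 0 < ε → ∃ Y : ℝ, ∀ ζ : ℂ, Y ≤ ζ.im →
      ‖a ζ - 1‖ < ε := by
    intro ε hε
    set E : ℝ := Real.exp (∫ s, f s) with hEdef
    have hE1 : (1:ℝ) ≤ E := Real.one_le_exp hQi0
    have hEpos : (0:ℝ) < E := lt_of_lt_of_le one_pos hE1
    -- dominated convergence to pick δ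
    have hDcont : ∀ c : ℝ, Continuous (fun s : ℝ => QQ f s - QQ f (s - c)) := fun c =>
      (QQ_continuous hf).sub ((QQ_continuous hf).comp (continuous_id.sub continuous_const))
    have hD0 : ∀ c : ℝ, 0 ≤ c → ∀ s : ℝ, 0 ≤ QQ f s - QQ f (s - c) := fun c hc s =>
      sub_nonneg.2 (QQ_mono hf hf0 (by linarith))
    have hDle : ∀ c s : ℝ, QQ f s - QQ f (s - c) ≤ ∫ r, f r := by
      intro c s
      have h1 := QQ_le_total hf hf0 s
      have h2 := QQ_nonneg hf0 (s - c)
      linarith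
    have hg : Tendsto (fun n : ℕ => ∫ t, f t * (QQ f t - QQ f (t - 1/((n:ℝ)+1))))
        atTop (nhds 0) := by
      have hmain := tendsto_integral_of_dominated_convergence
        (F := fun n (t : ℝ) => f t * (QQ f t - QQ f (t - 1/((n:ℝ)+1))))
        (f := fun _ : ℝ => (0:ℝ)) (bound := fun t => f t * ∫ r, f r)
        (fun n => hf.aestronglyMeasurable.mul (hDcont _).aestronglyMeasurable)
        (hf.mul_const _)
        (fun n => Eventually.of_forall fun t => by
          rw [Real.norm_eq_abs, abs_mul, _root_.abs_of_nonneg (hf0 t),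
            _root_.abs_of_nonneg (hD0 _ (by positivity) t)]
          exact mul_le_mul_of_nonneg_left (hDle _ t) (hf0 t))
        (Eventually.of_forall fun t => by
          have h1 : Tendsto (fun n : ℕ => t - 1/((n:ℝ)+1)) atTop (nhds t) := by
            have : Tendsto (fun n : ℕ => 1 / ((n:ℝ) + 1)) atTop (nhds 0) :=
              tendsto_one_div_add_atTop_nhds_zero_nat
            have h2 := (tendsto_const_nhds (x := t) (f := atTop (α := ℕ))).sub this
            simpa using h2
          have h3 := ((QQ_continuous hf).tendsto t).comp h1
          have h4 := (tendsto_const_nhds (x := QQ f t) (f := atTop (α := ℕ))).sub h3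
          rw [sub_self] at h4
          have h5 := h4.const_mul (f t)
          rw [mul_zero] at h5
          exact h5)
      simpa using hmain
    obtain ⟨n, hn⟩ : ∃ n : ℕ, ∫ t, f t * (QQ f t - QQ f (t - 1/((n:ℝ)+1))) < ε/(3*E) :=
      (hg.eventually_lt_const (by positivity)).exists
    set δ : ℝ := 1/((n:ℝ)+1) with hδdef
    have hδ : 0 < δ := by positivity
    set ε2 : ℝ := ε/(3*E*((∫ s, f s)^2+1)) with hε2def
    have hε2 : 0 < ε2 := by positivity
    have hYten : Tendsto (fun Y : ℝ => Real.exp (-(2 * Y * δ))) atTop (nhds 0) := by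
      apply Real.tendsto_exp_atBot.comp
      have h1 : Tendsto (fun Y : ℝ => Y * (-(2*δ))) atTop atBot :=
        tendsto_id.atTop_mul_const_of_neg (by linarith)
      exact h1.congr (fun Y => by ring)
    obtain ⟨Y0, hY0⟩ := eventually_atTop.1 (hYten.eventually_lt_const hε2)
    refine ⟨max Y0 0, ?_⟩
    intro ζ hζY
    have hζ0 : 0 ≤ ζ.im := le_trans (le_max_right _ _) hζY
    have h2 := (hper ζ hζ0).2 δ hδ
    have hX : Real.exp (-(2 * ζ.im * δ)) < ε2 := hY0 ζ.im (le_trans (le_max_left _ _) hζY)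
    have hX0 : (0:ℝ) ≤ Real.exp (-(2 * ζ.im * δ)) := (Real.exp_pos _).le
    set Qi : ℝ := ∫ s, f s with hQidef
    set G : ℝ := ∫ t, f t * (QQ f t - QQ f (t - δ)) with hGdef
    have hbound : E * (G + Real.exp (-(2 * ζ.im * δ)) * Qi ^ 2) < ε := by
      have h3 : E * G < ε/3 := by
        have := (mul_lt_mul_iff_right₀ hEpos).2 hn
        calc E * G < E * (ε / (3*E)) := this
          _ = ε/3 := by field_simp
      have h4 : E * (Real.exp (-(2 * ζ.im * δ)) * Qi ^ 2) ≤ ε/3 := by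
        have h5 : E * (Real.exp (-(2 * ζ.im * δ)) * Qi ^ 2) ≤ E * (ε2 * Qi ^ 2) := by
          apply mul_le_mul_of_nonneg_left _ hEpos.le
          exact mul_le_mul_of_nonneg_right hX.le (by positivity)
        have h6 : E * (ε2 * Qi ^ 2) ≤ ε/3 := by
          rw [hε2def]
          rw [show E * (ε / (3 * E * (Qi ^ 2 + 1)) * Qi ^ 2)
            = (ε / 3) * (Qi ^ 2 / (Qi ^ 2 + 1)) by field_simp]
          have h7 : Qi ^ 2 / (Qi ^ 2 + 1) ≤ 1 :=
            (div_le_one (by positivity)).2 (by linarith)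
          nlinarith [hε.le]
        linarith
      calc E * (G + Real.exp (-(2 * ζ.im * δ)) * Qi ^ 2)
          = E * G + E * (Real.exp (-(2 * ζ.im * δ)) * Qi ^ 2) := by ring
        _ < ε/3 + ε/3 := by linarith
        _ < ε := by linarith
    exact lt_of_le_of_lt h2 hbound
  refine ⟨fun ζ h => (hper ζ h).1, hpart2, ?_⟩
  obtain ⟨Y, hY⟩ := hpart2 1 one_pos
  refine ⟨max Y 1, lt_of_lt_of_le one_pos (le_max_right _ _), ?_⟩
  intro ζ him ha0
  by_contra hc
  push_neg at hc
  have h1 := hY ζ (le_trans (le_max_left _ _) hc.le)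
  rw [ha0] at h1
  norm_num at h1
end

section
/- Near a zero ζ₀ of the holomorphic function a of multiplicity N, the level set {ζ ≠ ζ₀ : a(ζ) ∈ (−∞, 0)} (preimage of the open negative real axis) intersected with a sufficiently small punctured disk around ζ₀ consists of exactly N connected arcs, each accumulating at ζ₀. -/
open Complex Metric

noncomputable def Complex.abs : AbsoluteValue ℂ ℝ := NormedField.toAbsoluteValue ℂ

lemma Complex.norm_eq_abs (z : ℂ) : ‖z‖ = Complex.abs z := rfl

lemma Complex.abs_ofReal (r : ℝ) : Complex.abs (r : ℂ) = |r| := Complex.norm_real r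

lemma Complex.abs_conj (z : ℂ) : Complex.abs ((starRingEnd ℂ) z) = Complex.abs z :=
  Complex.norm_conj z

lemma Complex.abs_exp (z : ℂ) : Complex.abs (Complex.exp z) = Real.exp z.re :=
  Complex.norm_exp z

lemma Complex.sq_abs (z : ℂ) : Complex.abs z ^ 2 = Complex.normSq z := Complex.sq_norm z

lemma Complex.abs_re_le_abs (z : ℂ) : |z.re| ≤ Complex.abs z := Complex.abs_re_le_norm z

lemma Complex.re_le_abs (z : ℂ) : z.re ≤ Complex.abs z := Complex.re_le_norm z

noncomputable def pjDir (N : ℕ) (k : ℕ) : ℂ :=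
  Complex.exp (Real.pi * Complex.I / N) * Complex.exp (2 * Real.pi * Complex.I / N) ^ k

lemma pjDir_pow {N : ℕ} (hN : N ≠ 0) (k : ℕ) : pjDir N k ^ N = -1 := by
  have h1 : Complex.exp (Real.pi * Complex.I / N) ^ N = -1 := by
    rw [← Complex.exp_nat_mul]
    have : (N : ℂ) * (Real.pi * Complex.I / N) = Real.pi * Complex.I := by
      have hN' : (N : ℂ) ≠ 0 := Nat.cast_ne_zero.mpr hN
      field_simp
    rw [this, Complex.exp_pi_mul_I]
  have h2 : Complex.exp (2 * Real.pi * Complex.I / N) ^ N = 1 :=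
    (Complex.isPrimitiveRoot_exp N hN).pow_eq_one
  rw [pjDir, mul_pow, h1, ← pow_mul, mul_comm k N, pow_mul, h2, one_pow, mul_one]

lemma pjDir_inj {N : ℕ} (hN : N ≠ 0) {j k : ℕ} (hj : j < N) (hk : k < N)
    (h : pjDir N j = pjDir N k) : j = k := by
  have hμ : Complex.exp (Real.pi * Complex.I / N) ≠ 0 := Complex.exp_ne_zero _
  rw [pjDir, pjDir] at h
  have := mul_left_cancel₀ hμ h
  exact (Complex.isPrimitiveRoot_exp N hN).pow_inj hj hk this

lemma pjDir_surj {N : ℕ} (hN : N ≠ 0) {v : ℂ} (hv : v ^ N = -1) :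
    ∃ k < N, pjDir N k = v := by
  haveI : NeZero N := ⟨hN⟩
  have hμ : Complex.exp (Real.pi * Complex.I / N) ≠ 0 := Complex.exp_ne_zero _
  have hξ : (v / Complex.exp (Real.pi * Complex.I / N)) ^ N = 1 := by
    rw [div_pow, hv]
    have h1 : Complex.exp (Real.pi * Complex.I / N) ^ N = -1 := by
      rw [← Complex.exp_nat_mul]
      have : (N : ℂ) * (Real.pi * Complex.I / N) = Real.pi * Complex.I := by
        have hN' : (N : ℂ) ≠ 0 := Nat.cast_ne_zero.mpr hN
        field_simp
      rw [this, Complex.exp_pi_mul_I]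
    rw [h1]; norm_num
  obtain ⟨i, hi, hpow⟩ := (Complex.isPrimitiveRoot_exp N hN).eq_pow_of_pow_eq_one hξ
  exact ⟨i, hi, by rw [pjDir, hpow, mul_div_cancel₀ _ hμ]⟩

lemma pjDir_abs (N : ℕ) (k : ℕ) : Complex.abs (pjDir N k) = 1 := by
  rw [pjDir, map_mul, map_pow, Complex.abs_exp, Complex.abs_exp]
  have h1 : (Real.pi * Complex.I / N).re = 0 := by
    simp [Complex.div_re]
  have h2 : (2 * Real.pi * Complex.I / N).re = 0 := by
    simp [Complex.div_re]
  rw [h1, h2, Real.exp_zero, one_mul, one_pow]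

lemma pjDir_ne_zero (N : ℕ) (k : ℕ) : pjDir N k ≠ 0 := by
  intro h
  have := pjDir_abs N k
  rw [h] at this; simp at this

/-- closed ray in direction `pjDir N k` -/
def pjRay (N : ℕ) (k : ℕ) : Set ℂ := {z : ℂ | ∃ t : ℝ, 0 ≤ t ∧ z = (t : ℂ) * pjDir N k}

lemma pjRay_isClosed (N k : ℕ) : IsClosed (pjRay N k) := by
  have h : pjRay N k = (fun z : ℂ => z / pjDir N k) ⁻¹'
      {w : ℂ | w.im = 0 ∧ 0 ≤ w.re} := by
    ext z
    constructor
    · rintro ⟨t, ht, rfl⟩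
      have : (t : ℂ) * pjDir N k / pjDir N k = (t : ℂ) :=
        mul_div_cancel_right₀ _ (pjDir_ne_zero N k)
      simp only [Set.mem_preimage, Set.mem_setOf_eq, this]
      simp [ht]
    · intro hz
      obtain ⟨him, hre⟩ := hz
      refine ⟨(z / pjDir N k).re, hre, ?_⟩
      have : (((z / pjDir N k).re : ℂ)) = z / pjDir N k := by
        apply Complex.ext <;> simp [him]
      rw [this, div_mul_cancel₀ _ (pjDir_ne_zero N k)]
  rw [h]
  apply IsClosed.preimage (by fun_prop)
  exact ((isClosed_singleton.preimage Complex.continuous_im).inter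
    (isClosed_le continuous_const Complex.continuous_re))

lemma preconn_closed_pair {s F₁ F₂ : Set ℂ} (hs : IsPreconnected s)
    (h1 : IsClosed F₁) (h2 : IsClosed F₂) (hcov : s ⊆ F₁ ∪ F₂)
    (hdis : ∀ z ∈ s, z ∈ F₁ → z ∉ F₂) (hne : (s ∩ F₁).Nonempty) : s ⊆ F₁ := by
  by_contra hsub
  have hne2 : (s ∩ F₁ᶜ).Nonempty := by
    rw [Set.not_subset] at hsub
    obtain ⟨z, hz, hz2⟩ := hsub
    exact ⟨z, hz, hz2⟩
  have hne1 : (s ∩ F₂ᶜ).Nonempty := by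
    obtain ⟨z, hz, hz1⟩ := hne
    exact ⟨z, hz, hdis z hz hz1⟩
  have hcov' : s ⊆ F₂ᶜ ∪ F₁ᶜ := by
    intro z hz
    by_cases h : z ∈ F₁
    · exact Or.inl (hdis z hz h)
    · exact Or.inr h
  obtain ⟨z, hz, hz1, hz2⟩ := hs F₂ᶜ F₁ᶜ h2.isOpen_compl h1.isOpen_compl hcov' hne1 hne2
  exact (hcov hz).elim hz2 hz1

open Complex Metric

lemma pj_abs_lt_abs {u A B E₁ E₂ : ℂ} {t₁ t₂ au ε : ℝ}
    (hau : Complex.abs u = au) (haupos : 0 < au) (hεpos : 0 < ε) (hεsmall : 3 * ε ≤ au)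
    (ht₁ : 0 < t₁) (ht : t₁ < t₂)
    (hA : A = (t₁ : ℂ) * u + E₁) (hB : B = ((t₂ - t₁ : ℝ) : ℂ) * u + E₂)
    (hE₁ : Complex.abs E₁ ≤ ε * t₁) (hE₂ : Complex.abs E₂ ≤ ε * (t₂ - t₁)) :
    Complex.abs A < Complex.abs (A + B) := by
  have hs : 0 < t₂ - t₁ := by linarith
  have hAlow : t₁ * au - ε * t₁ ≤ Complex.abs A := by
    have h1 : Complex.abs ((t₁ : ℂ) * u) = t₁ * au := by
      rw [map_mul, Complex.abs_ofReal, abs_of_pos ht₁, hau]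
    have h3 : Complex.abs ((t₁ : ℂ) * u) ≤ Complex.abs A + Complex.abs E₁ := by
      have h2 : (t₁ : ℂ) * u = A - E₁ := by rw [hA]; ring
      rw [h2, ← Complex.norm_eq_abs, ← Complex.norm_eq_abs, ← Complex.norm_eq_abs]
      exact norm_sub_le _ _
    rw [h1] at h3
    linarith
  have hApos : 0 < Complex.abs A := by nlinarith
  have hre : t₁ * (t₂ - t₁) * au ^ 2 - (t₁ * au) * (ε * (t₂ - t₁))
      - (ε * t₁) * ((t₂ - t₁) * au) - (ε * t₁) * (ε * (t₂ - t₁))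
      ≤ ((starRingEnd ℂ) A * B).re := by
    have hexp : (starRingEnd ℂ) A * B =
        ((t₁ : ℂ) * ((t₂ - t₁ : ℝ) : ℂ)) * ((starRingEnd ℂ) u * u)
        + (starRingEnd ℂ) ((t₁ : ℂ) * u) * E₂
        + (starRingEnd ℂ) E₁ * (((t₂ - t₁ : ℝ) : ℂ) * u)
        + (starRingEnd ℂ) E₁ * E₂ := by
      rw [hA, hB]
      simp only [map_add, map_mul, Complex.conj_ofReal]
      ring
    rw [hexp]
    simp only [Complex.add_re]
    have hterm1 : (((t₁ : ℂ) * ((t₂ - t₁ : ℝ) : ℂ)) * ((starRingEnd ℂ) u * u)).re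
        = t₁ * (t₂ - t₁) * au ^ 2 := by
      rw [show (starRingEnd ℂ) u * u = ((Complex.normSq u : ℝ) : ℂ) by
        rw [← Complex.normSq_eq_conj_mul_self]]
      rw [show ((t₁ : ℂ) * ((t₂ - t₁ : ℝ) : ℂ)) * ((Complex.normSq u : ℝ) : ℂ)
          = (((t₁ * (t₂ - t₁) * Complex.normSq u : ℝ)) : ℂ) by push_cast; ring]
      rw [Complex.ofReal_re, ← Complex.sq_abs, hau]
    have hb2 : -(t₁ * au * (ε * (t₂ - t₁)))
        ≤ ((starRingEnd ℂ) ((t₁ : ℂ) * u) * E₂).re := by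
      refine le_trans ?_ ((abs_le.1 (Complex.abs_re_le_abs _)).1)
      have habs : Complex.abs ((starRingEnd ℂ) ((t₁ : ℂ) * u) * E₂)
          ≤ t₁ * au * (ε * (t₂ - t₁)) := by
        rw [map_mul, Complex.abs_conj, map_mul, Complex.abs_ofReal, abs_of_pos ht₁, hau]
        nlinarith [mul_le_mul_of_nonneg_left hE₂ (show (0:ℝ) ≤ t₁ * au by positivity)]
      linarith
    have hb3 : -(ε * t₁ * ((t₂ - t₁) * au))
        ≤ ((starRingEnd ℂ) E₁ * (((t₂ - t₁ : ℝ) : ℂ) * u)).re := by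
      refine le_trans ?_ ((abs_le.1 (Complex.abs_re_le_abs _)).1)
      have habs : Complex.abs ((starRingEnd ℂ) E₁ * (((t₂ - t₁ : ℝ) : ℂ) * u))
          ≤ ε * t₁ * ((t₂ - t₁) * au) := by
        rw [map_mul, Complex.abs_conj, map_mul, Complex.abs_ofReal, abs_of_pos hs, hau]
        nlinarith [mul_le_mul_of_nonneg_right hE₁ (show (0:ℝ) ≤ (t₂ - t₁) * au by positivity)]
      linarith
    have hb4 : -(ε * t₁ * (ε * (t₂ - t₁)))
        ≤ ((starRingEnd ℂ) E₁ * E₂).re := by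
      refine le_trans ?_ ((abs_le.1 (Complex.abs_re_le_abs _)).1)
      have habs : Complex.abs ((starRingEnd ℂ) E₁ * E₂) ≤ ε * t₁ * (ε * (t₂ - t₁)) := by
        rw [map_mul, Complex.abs_conj]
        nlinarith [mul_le_mul hE₁ hE₂ (Complex.abs.nonneg E₂) (show (0:ℝ) ≤ ε * t₁ by positivity)]
      linarith
    rw [hterm1]
    linarith
  have hrepos : 0 < ((starRingEnd ℂ) A * B).re := by
    refine lt_of_lt_of_le ?_ hre
    have hfac : (2/9) * au^2 ≤ au^2 - 2*ε*au - ε^2 := by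
      nlinarith [mul_le_mul_of_nonneg_left hεsmall hεpos.le,
        mul_le_mul_of_nonneg_right hεsmall haupos.le]
    have hmul := mul_le_mul_of_nonneg_left hfac (le_of_lt (mul_pos ht₁ hs))
    nlinarith [mul_pos (mul_pos ht₁ hs) (mul_pos haupos haupos)]
  have hkey : Complex.abs A * Complex.abs A < Complex.abs A * Complex.abs (A + B) := by
    have h1 : ((starRingEnd ℂ) A * (A + B)).re ≤ Complex.abs A * Complex.abs (A + B) := by
      refine le_trans (Complex.re_le_abs _) ?_
      rw [map_mul, Complex.abs_conj]
    have h2 : ((starRingEnd ℂ) A * (A + B)).re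
        = Complex.abs A ^ 2 + ((starRingEnd ℂ) A * B).re := by
      rw [mul_add, Complex.add_re]
      congr 1
      rw [show (starRingEnd ℂ) A * A = ((Complex.normSq A : ℝ) : ℂ) by
        rw [← Complex.normSq_eq_conj_mul_self]]
      rw [Complex.ofReal_re, Complex.sq_abs]
    nlinarith
  exact lt_of_mul_lt_mul_left hkey (le_of_lt hApos)

/-- Near a zero `ζ₀` of multiplicity `N` of a holomorphic function `a`, the
preimage of the open negative real axis in a small punctured disk around `ζ₀`
consists of exactly `N` connected arcs, each accumulating at `ζ₀`. -/
theorem phase_jump_arcs_near_zero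
    (Ω : Set ℂ) (hΩ : IsOpen Ω)
    (a : ℂ → ℂ) (ha : DifferentiableOn ℂ a Ω)
    (ζ₀ : ℂ) (hζ₀ : ζ₀ ∈ Ω) (h0 : a ζ₀ = 0)
    (N : ℕ) (hN : 1 ≤ N)
    (hA : AnalyticAt ℂ a ζ₀) (hord : analyticOrderAt a ζ₀ = (N : ℕ∞)) :
    ∃ r₀ > (0:ℝ), ∀ r : ℝ, 0 < r → r ≤ r₀ →
      ∀ S : Set ℂ,
        S = {ζ : ℂ | ζ ∈ ball ζ₀ r ∧ ζ ≠ ζ₀ ∧ ∃ x : ℝ, x < 0 ∧ a ζ = (x : ℂ)} →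
        ∃ p : Fin N → ℂ,
          (∀ i, p i ∈ S) ∧
          (∀ i j, i ≠ j →
            connectedComponentIn S (p i) ≠ connectedComponentIn S (p j)) ∧
          (∀ z ∈ S, ∃ i, z ∈ connectedComponentIn S (p i)) ∧
          (∀ i, IsConnected (connectedComponentIn S (p i)) ∧
            ζ₀ ∈ closure (connectedComponentIn S (p i))) := by
  have hN0 : N ≠ 0 := by omega
  have hNC : (N : ℂ) ≠ 0 := Nat.cast_ne_zero.mpr hN0
  -- Step 1: factorization a = (ζ - ζ₀)^N * g
  obtain ⟨g, hg, hg0, hfac⟩ := hA.analyticOrderAt_eq_natCast.mp hord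
  -- Step 2: N-th root and φ
  set hfun : ℂ → ℂ :=
    fun ζ => Complex.exp ((Complex.log (g ζ₀) + Complex.log (g ζ / g ζ₀)) / N) with hhfun
  set φ : ℂ → ℂ := fun ζ => (ζ - ζ₀) * hfun ζ with hφdef
  have hφζ₀ : φ ζ₀ = 0 := by simp [hφdef]
  set c : ℂ := hfun ζ₀ with hcdef
  have hc : c ≠ 0 := Complex.exp_ne_zero _
  -- eventually a = φ ^ N
  have hratio : Filter.Tendsto (fun ζ => g ζ / g ζ₀) (nhds ζ₀) (nhds 1) := by
    have h1 : Filter.Tendsto (fun ζ => g ζ / g ζ₀) (nhds ζ₀) (nhds (g ζ₀ / g ζ₀)) :=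
      hg.continuousAt.tendsto.div_const (g ζ₀)
    rwa [div_self hg0] at h1
  have hslit : ∀ᶠ ζ in nhds ζ₀, g ζ / g ζ₀ ∈ Complex.slitPlane :=
    hratio.eventually (isOpen_slitPlane.eventually_mem Complex.one_mem_slitPlane)
  have haφ : ∀ᶠ ζ in nhds ζ₀, a ζ = φ ζ ^ N := by
    filter_upwards [hfac, hslit] with ζ h1 h2
    have hr0 : g ζ / g ζ₀ ≠ 0 := Complex.slitPlane_ne_zero h2
    have hpow : hfun ζ ^ N = g ζ := by
      rw [hhfun]
      simp only
      rw [← Complex.exp_nat_mul]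
      have harith : (N : ℂ) * ((Complex.log (g ζ₀) + Complex.log (g ζ / g ζ₀)) / N)
          = Complex.log (g ζ₀) + Complex.log (g ζ / g ζ₀) := by field_simp
      rw [harith, Complex.exp_add, Complex.exp_log hg0, Complex.exp_log hr0]
      field_simp
    rw [h1, hφdef]
    simp only [smul_eq_mul]
    rw [mul_pow, hpow]
  -- analyticity of φ
  have hhana : AnalyticAt ℂ hfun ζ₀ := by
    apply AnalyticAt.cexp
    apply AnalyticAt.div _ analyticAt_const hNC
    apply AnalyticAt.add analyticAt_const
    exact (hg.div analyticAt_const hg0).clog (by show g ζ₀ / g ζ₀ ∈ _; rw [div_self hg0]; exact Complex.one_mem_slitPlane)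
  have hφa : AnalyticAt ℂ φ ζ₀ := ((analyticAt_id.sub analyticAt_const).mul hhana)
  -- derivative of φ at ζ₀
  have hder : HasDerivAt φ c ζ₀ := by
    have h1 : HasDerivAt (fun ζ : ℂ => ζ - ζ₀) 1 ζ₀ := (hasDerivAt_id ζ₀).sub_const ζ₀
    have h2 : HasDerivAt hfun (deriv hfun ζ₀) ζ₀ := hhana.differentiableAt.hasDerivAt
    have h3 : HasDerivAt (fun ζ => (ζ - ζ₀) * hfun ζ) _ ζ₀ := h1.mul h2
    rw [hφdef]
    convert h3 using 1
    simp [hcdef]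
  have hstrict : HasStrictDerivAt φ c ζ₀ := by
    have hcd : ContDiffAt ℂ 1 φ ζ₀ := hφa.contDiffAt
    have := hcd.hasStrictDerivAt one_ne_zero
    rwa [hder.deriv] at this
  -- local inverse
  set F' := hstrict.hasStrictFDerivAt_equiv hc with hF'
  set e := F'.toOpenPartialHomeomorph φ with hedef
  have hcoe : ⇑e = φ := F'.toOpenPartialHomeomorph_coe
  have hsrc : ζ₀ ∈ e.source := F'.mem_toOpenPartialHomeomorph_source
  have htgt0 : (0 : ℂ) ∈ e.target := by
    have := F'.image_mem_toOpenPartialHomeomorph_target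
    rwa [hφζ₀] at this
  have hψ0 : e.symm 0 = ζ₀ := by
    have := e.left_inv hsrc
    rwa [hcoe, hφζ₀] at this
  -- epsilon
  set ca : ℝ := Complex.abs c with hcadef
  have hcapos : 0 < ca := Complex.abs.pos hc
  set ε : ℝ := 1 / (3 * ca) with hεdef
  have hεpos : 0 < ε := by positivity
  -- continuity of deriv φ at ζ₀
  have hdercont : Filter.Tendsto (deriv φ) (nhds ζ₀) (nhds c) := by
    have h1 : AnalyticAt ℂ (fderiv ℂ φ) ζ₀ := hφa.fderiv
    have h2 : Filter.Tendsto (fun z => fderiv ℂ φ z 1) (nhds ζ₀)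
        (nhds (fderiv ℂ φ ζ₀ 1)) :=
      ((ContinuousLinearMap.apply ℂ ℂ (1 : ℂ)).continuous.continuousAt.comp
        h1.continuousAt).tendsto
    have h3 : (fun z => fderiv ℂ φ z 1) = deriv φ := rfl
    have h4 : fderiv ℂ φ ζ₀ 1 = c := by
      rw [show fderiv ℂ φ ζ₀ 1 = deriv φ ζ₀ from rfl, hder.deriv]
    rw [h3, h4] at h2
    exact h2
  have hGood : ∀ᶠ u in nhds c, u ≠ 0 ∧ dist u⁻¹ c⁻¹ < ε := by
    have o1 : ∀ᶠ u in nhds c, u ≠ 0 :=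
      (isOpen_compl_singleton.eventually_mem (by simpa using hc) : _)
    have o2 : ∀ᶠ u in nhds c, dist u⁻¹ c⁻¹ < ε :=
      Metric.tendsto_nhds.mp (continuousAt_inv₀ hc) ε hεpos
    exact o1.and o2
  -- extract r₁
  have hbig : ∀ᶠ z in nhds ζ₀, a z = φ z ^ N ∧ AnalyticAt ℂ φ z ∧
      (deriv φ z ≠ 0 ∧ dist (deriv φ z)⁻¹ c⁻¹ < ε) ∧ z ∈ e.source := by
    filter_upwards [haφ, hφa.eventually_analyticAt, hdercont.eventually hGood,
      e.open_source.eventually_mem hsrc] with z h1 h2 h3 h4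
    exact ⟨h1, h2, h3, h4⟩
  obtain ⟨r₁, hr₁pos, hr₁⟩ := Metric.eventually_nhds_iff_ball.mp hbig
  -- extract ρ
  have hUopen : IsOpen (e.target ∩ e.symm ⁻¹' ball ζ₀ (r₁ / 2)) :=
    e.isOpen_inter_preimage_symm isOpen_ball
  have hU0 : (0 : ℂ) ∈ e.target ∩ e.symm ⁻¹' ball ζ₀ (r₁ / 2) :=
    ⟨htgt0, by simp only [Set.mem_preimage, hψ0]; exact mem_ball_self (by linarith)⟩
  obtain ⟨ρ, hρpos, hρ⟩ := Metric.isOpen_iff.mp hUopen 0 hU0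
  -- extract r₂
  have hφc : Filter.Tendsto φ (nhds ζ₀) (nhds 0) := by
    have := hφa.continuousAt
    rwa [ContinuousAt, hφζ₀] at this
  have hφev : ∀ᶠ z in nhds ζ₀, φ z ∈ ball 0 ρ :=
    hφc.eventually (isOpen_ball.eventually_mem (mem_ball_self hρpos))
  obtain ⟨r₂, hr₂pos, hr₂⟩ := Metric.eventually_nhds_iff_ball.mp hφev
  -- final radius
  refine ⟨min (r₁ / 2) r₂, by positivity, ?_⟩
  intro r hr hrle S hS
  have hrr₁ : r ≤ r₁ / 2 := le_trans hrle (min_le_left _ _)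
  have hrr₂ : r ≤ r₂ := le_trans hrle (min_le_right _ _)
  have hball₁ : ball ζ₀ r ⊆ ball ζ₀ r₁ := ball_subset_ball (by linarith)
  have hcb : ball ζ₀ r ⊆ closedBall ζ₀ (r₁ / 2) :=
    fun z hz => le_of_lt (lt_of_lt_of_le (mem_ball.mp hz) hrr₁)
  have hcb₁ : closedBall ζ₀ (r₁ / 2) ⊆ ball ζ₀ r₁ :=
    fun z hz => lt_of_le_of_lt (mem_closedBall.mp hz) (by linarith)
  have hP3 : ∀ w ∈ ball (0:ℂ) ρ, w ∈ e.target ∧ e.symm w ∈ ball ζ₀ (r₁ / 2) :=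
    fun w hw => hρ hw
  have hP4 : ∀ z ∈ ball ζ₀ r, φ z ∈ ball (0:ℂ) ρ :=
    fun z hz => hr₂ z (mem_ball.mp (ball_subset_ball hrr₂ hz))
  -- derivative of the inverse on ball 0 ρ
  have hψder : ∀ w ∈ ball (0:ℂ) ρ, HasDerivAt (⇑e.symm) ((deriv φ (e.symm w))⁻¹) w := by
    intro w hw
    obtain ⟨hwt, hwb⟩ := hP3 w hw
    have hz := hr₁ _ (mem_ball.mp (ball_subset_ball (by linarith) hwb))
    exact e.hasDerivAt_symm hwt hz.2.2.1.1
      (by rw [hcoe]; exact hz.2.1.differentiableAt.hasDerivAt)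
  -- Lipschitz estimate for the inverse minus its linearization
  have hLip : ∀ x ∈ ball (0:ℂ) ρ, ∀ y ∈ ball (0:ℂ) ρ,
      Complex.abs ((e.symm y - c⁻¹ * y) - (e.symm x - c⁻¹ * x)) ≤ ε * Complex.abs (y - x) := by
    intro x hx y hy
    have key := Convex.norm_image_sub_le_of_norm_hasDerivWithin_le
      (f := fun w => e.symm w - c⁻¹ * w) (f' := fun w => (deriv φ (e.symm w))⁻¹ - c⁻¹)
      (s := ball (0:ℂ) ρ) (C := ε) ?_ ?_ (convex_ball 0 ρ) hx hy
    · simpa [Complex.norm_eq_abs] using key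
    · intro w hw
      have hm : HasDerivAt (fun w : ℂ => c⁻¹ * w) c⁻¹ w := by
        simpa using (hasDerivAt_id w).const_mul c⁻¹
      exact ((hψder w hw).sub hm).hasDerivWithinAt
    · intro w hw
      obtain ⟨hwt, hwb⟩ := hP3 w hw
      have hz := hr₁ _ (mem_ball.mp (ball_subset_ball (by linarith) hwb))
      have hd := hz.2.2.1.2
      rw [Complex.dist_eq] at hd
      rw [Complex.norm_eq_abs]
      exact le_of_lt hd
  -- the curves
  set γ : Fin N → ℝ → ℂ := fun i t => e.symm ((t : ℂ) * pjDir N i) with hγdef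
  have habsw : ∀ (i : Fin N) (t : ℝ), 0 < t → Complex.abs ((t : ℂ) * pjDir N i) = t := by
    intro i t ht
    rw [map_mul, pjDir_abs, mul_one, Complex.abs_ofReal, abs_of_pos ht]
  have hwball : ∀ (i : Fin N) (t : ℝ), 0 < t → t < ρ → ((t : ℂ) * pjDir N i) ∈ ball (0:ℂ) ρ := by
    intro i t ht htρ
    rw [mem_ball, dist_zero_right, Complex.norm_eq_abs, habsw i t ht]
    exact htρ
  -- strict monotonicity of |γ i t - ζ₀|
  have hMono : ∀ (i : Fin N) (t₁ t₂ : ℝ), 0 < t₁ → t₁ < t₂ → t₂ < ρ →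
      Complex.abs (γ i t₁ - ζ₀) < Complex.abs (γ i t₂ - ζ₀) := by
    intro i t₁ t₂ ht₁ ht₁₂ ht₂ρ
    have ht₂ : 0 < t₂ := lt_trans ht₁ ht₁₂
    have hw1 := hwball i t₁ ht₁ (lt_trans ht₁₂ ht₂ρ)
    have hw2 := hwball i t₂ ht₂ ht₂ρ
    have h0m : (0:ℂ) ∈ ball (0:ℂ) ρ := mem_ball_self hρpos
    set w₁ : ℂ := (t₁ : ℂ) * pjDir N i with hw₁def
    set w₂ : ℂ := (t₂ : ℂ) * pjDir N i with hw₂def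
    set E₁ : ℂ := (e.symm w₁ - c⁻¹ * w₁) - (e.symm 0 - c⁻¹ * 0) with hE₁def
    set E₂ : ℂ := (e.symm w₂ - c⁻¹ * w₂) - (e.symm w₁ - c⁻¹ * w₁) with hE₂def
    have hE₁ : Complex.abs E₁ ≤ ε * t₁ := by
      have := hLip 0 h0m w₁ hw1
      rw [← hE₁def] at this
      calc Complex.abs E₁ ≤ ε * Complex.abs (w₁ - 0) := this
        _ = ε * t₁ := by rw [sub_zero, habsw i t₁ ht₁]
    have hE₂ : Complex.abs E₂ ≤ ε * (t₂ - t₁) := by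
      have := hLip w₁ hw1 w₂ hw2
      rw [← hE₂def] at this
      calc Complex.abs E₂ ≤ ε * Complex.abs (w₂ - w₁) := this
        _ = ε * (t₂ - t₁) := by
            have hsub : w₂ - w₁ = ((t₂ - t₁ : ℝ) : ℂ) * pjDir N i := by
              rw [hw₁def, hw₂def]; push_cast; ring
            rw [hsub, habsw i (t₂ - t₁) (by linarith)]
    have hrun := pj_abs_lt_abs (u := c⁻¹ * pjDir N i) (A := γ i t₁ - ζ₀)
      (B := γ i t₂ - γ i t₁) (E₁ := E₁) (E₂ := E₂) (t₁ := t₁) (t₂ := t₂)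
      (au := ca⁻¹) (ε := ε)
      (by rw [map_mul, map_inv₀, pjDir_abs, mul_one])
      (by positivity) hεpos
      (le_of_eq (by rw [hεdef]; field_simp)) ht₁ ht₁₂
      (by rw [hγdef]; simp only [← hw₁def]; rw [hE₁def, hψ0]; ring)
      (by rw [hγdef]; simp only [← hw₁def, ← hw₂def]; rw [hE₂def, hw₁def, hw₂def]; push_cast; ring)
      hE₁ hE₂
    have hab : (γ i t₁ - ζ₀) + (γ i t₂ - γ i t₁) = γ i t₂ - ζ₀ := by ring
    rwa [hab] at hrun
  -- the curves tend to ζ₀ as t → 0⁺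
  have htend0 : ∀ i : Fin N, Filter.Tendsto (γ i) (nhdsWithin (0:ℝ) (Set.Ioi 0)) (nhds ζ₀) := by
    intro i
    have hψc : ContinuousAt (⇑e.symm) 0 :=
      e.symm.continuousAt (by rw [OpenPartialHomeomorph.symm_source]; exact htgt0)
    have hin : Filter.Tendsto (fun t : ℝ => (t : ℂ) * pjDir N i)
        (nhdsWithin (0:ℝ) (Set.Ioi 0)) (nhds 0) := by
      have hcont : Continuous fun t : ℝ => (t : ℂ) * pjDir N i := by fun_prop
      have h2 := hcont.tendsto 0
      simp only [Complex.ofReal_zero, zero_mul] at h2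
      exact h2.mono_left nhdsWithin_le_nhds
    have := hψc.tendsto.comp hin
    rwa [hψ0] at this
  have hev' : ∀ i : Fin N, ∀ᶠ t in nhdsWithin (0:ℝ) (Set.Ioi 0),
      0 < t ∧ t < ρ ∧ γ i t ∈ ball ζ₀ r := by
    intro i
    have e1 : ∀ᶠ t in nhdsWithin (0:ℝ) (Set.Ioi 0), γ i t ∈ ball ζ₀ r :=
      (htend0 i).eventually (isOpen_ball.eventually_mem (mem_ball_self hr))
    have e2 : ∀ᶠ t in nhdsWithin (0:ℝ) (Set.Ioi 0), t ∈ Set.Ioo (0:ℝ) ρ :=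
      Filter.eventually_of_mem (Ioo_mem_nhdsGT_of_mem ⟨le_refl 0, hρpos⟩) (fun t ht => ht)
    filter_upwards [e1, e2] with t h1 h2
    exact ⟨h2.1, h2.2, h1⟩
  -- the N arcs
  set Sk : Fin N → Set ℂ := fun i => {ζ : ℂ | ζ ∈ ball ζ₀ r ∧ ζ ≠ ζ₀ ∧
    ∃ t : ℝ, 0 < t ∧ t < ρ ∧ φ ζ = (t : ℂ) * pjDir N i} with hSkdef
  have hC1 : ∀ (i : Fin N) (t : ℝ), 0 < t → t < ρ → γ i t ∈ ball ζ₀ r → γ i t ∈ Sk i := by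
    intro i t ht htρ hbm
    have hw := hwball i t ht htρ
    have hri : φ (γ i t) = (t : ℂ) * pjDir N i := by
      have h := e.right_inv (hP3 _ hw).1
      rw [hcoe] at h
      exact h
    have hne : γ i t ≠ ζ₀ := by
      intro h
      rw [h, hφζ₀] at hri
      exact mul_ne_zero (by exact_mod_cast ht.ne') (pjDir_ne_zero N i) hri.symm
    exact ⟨hbm, hne, t, ht, htρ, hri⟩
  -- decomposition of S
  have hSdec : ∀ z ∈ S, ∃ i : Fin N, z ∈ Sk i := by
    intro z hz
    rw [hS] at hz
    obtain ⟨hzb, hzne, x, hx, hax⟩ := hz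
    have hz₁ := hr₁ _ (mem_ball.mp (hball₁ hzb))
    have hφz : φ z ^ N = (x : ℂ) := by rw [← hz₁.1, hax]
    have hφne : φ z ≠ 0 := by
      intro h
      rw [h, zero_pow hN0] at hφz
      have : x = 0 := by exact_mod_cast hφz.symm
      linarith
    set t : ℝ := Complex.abs (φ z) with htdef
    have htpos : 0 < t := Complex.abs.pos hφne
    have htρ : t < ρ := by
      have := hP4 z hzb
      rwa [mem_ball, dist_zero_right, Complex.norm_eq_abs] at this
    have htN : t ^ N = -x := by
      have h1 : Complex.abs (φ z ^ N) = t ^ N := by rw [map_pow]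
      rw [hφz, Complex.abs_ofReal, abs_of_neg hx] at h1
      linarith
    have hv : (φ z / (t : ℂ)) ^ N = -1 := by
      rw [div_pow, hφz]
      rw [show ((t:ℂ)) ^ N = ((t ^ N : ℝ) : ℂ) by push_cast; ring, htN]
      have hx0 : (x : ℂ) ≠ 0 := by exact_mod_cast ne_of_lt hx
      rw [Complex.ofReal_neg, div_neg, div_self hx0]
    obtain ⟨k, hk, hdk⟩ := pjDir_surj hN0 hv
    refine ⟨⟨k, hk⟩, hzb, hzne, t, htpos, htρ, ?_⟩
    have ht0 : (t : ℂ) ≠ 0 := by exact_mod_cast htpos.ne'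
    show φ z = (t : ℂ) * pjDir N k
    rw [hdk]
    field_simp
  have hSkS : ∀ i : Fin N, Sk i ⊆ S := by
    intro i ζ hζ
    obtain ⟨hbm, hne, t, ht, htρ, hφ⟩ := hζ
    have hz₁ := hr₁ _ (mem_ball.mp (hball₁ hbm))
    rw [hS]
    refine ⟨hbm, hne, -(t ^ N), neg_lt_zero.mpr (pow_pos ht N), ?_⟩
    rw [hz₁.1, hφ, mul_pow, pjDir_pow hN0]
    push_cast
    ring
  -- the arcs are pairwise disjoint
  have hSkdisj : ∀ (i j : Fin N) (z : ℂ), z ∈ Sk i → z ∈ Sk j → i = j := by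
    intro i j z hi hj
    obtain ⟨_, _, t, ht, _, hφi⟩ := hi
    obtain ⟨_, _, s, hs, _, hφj⟩ := hj
    have heq := hφi.symm.trans hφj
    have habs : t = s := by
      have h2 := congrArg Complex.abs heq
      rwa [map_mul, map_mul, pjDir_abs, pjDir_abs, mul_one, mul_one, Complex.abs_ofReal,
        Complex.abs_ofReal, abs_of_pos ht, abs_of_pos hs] at h2
    rw [← habs] at heq
    have hdir : pjDir N i = pjDir N j :=
      mul_left_cancel₀ (show (t:ℂ) ≠ 0 by exact_mod_cast ht.ne') heq
    exact Fin.ext (pjDir_inj hN0 i.isLt j.isLt hdir)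
  -- Sk i equals the image of an interval under γ i
  set T : Fin N → Set ℝ := fun i => {t : ℝ | 0 < t ∧ t < ρ ∧ γ i t ∈ ball ζ₀ r} with hTdef
  have hSkγ : ∀ i : Fin N, Sk i = γ i '' T i := by
    intro i
    apply Set.Subset.antisymm
    · intro ζ hζ
      obtain ⟨hbm, hne, t, ht, htρ, hφ⟩ := hζ
      have hz₁ := hr₁ _ (mem_ball.mp (hball₁ hbm))
      have hγt : γ i t = ζ := by
        have h := e.left_inv hz₁.2.2.2
        rw [hcoe] at h
        rw [hγdef]
        simp only
        rw [← hφ, h]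
      exact ⟨t, ⟨ht, htρ, by rw [hγt]; exact hbm⟩, hγt⟩
    · rintro ζ ⟨t, ⟨ht, htρ, hbm⟩, rfl⟩
      exact hC1 i t ht htρ hbm
  have hTconn : ∀ i : Fin N, IsPreconnected (T i) := by
    intro i
    apply Set.OrdConnected.isPreconnected
    constructor
    intro t₁ h₁ t₂ h₂ z hz
    refine ⟨lt_of_lt_of_le h₁.1 hz.1, lt_of_le_of_lt hz.2 h₂.2.1, ?_⟩
    rcases eq_or_lt_of_le hz.2 with hEq | hlt
    · rw [hEq]; exact h₂.2.2
    · rw [mem_ball, Complex.dist_eq]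
      calc Complex.abs (γ i z - ζ₀) < Complex.abs (γ i t₂ - ζ₀) :=
            hMono i z t₂ (lt_of_lt_of_le h₁.1 hz.1) hlt h₂.2.1
        _ < r := by
            have := h₂.2.2
            rwa [mem_ball, Complex.dist_eq] at this
  have hγcont : ∀ i : Fin N, ContinuousOn (γ i) (T i) := by
    intro i
    apply ContinuousOn.comp (e.continuousOn_symm)
      ((Continuous.continuousOn (by fun_prop) : ContinuousOn (fun t : ℝ => (t:ℂ) * pjDir N i) (T i)))
    intro t htm
    exact (hP3 _ (hwball i t htm.1 htm.2.1)).1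
  have hSkconn : ∀ i : Fin N, IsPreconnected (Sk i) := by
    intro i
    rw [hSkγ i]
    exact (hTconn i).image (γ i) (hγcont i)
  -- pick points on each arc
  have hpts : ∀ i : Fin N, ∃ t : ℝ, 0 < t ∧ t < ρ ∧ γ i t ∈ ball ζ₀ r :=
    fun i => (hev' i).exists
  choose tf htf using hpts
  set p : Fin N → ℂ := fun i => γ i (tf i) with hpdef
  have hpS : ∀ i : Fin N, p i ∈ Sk i :=
    fun i => hC1 i (tf i) (htf i).1 (htf i).2.1 (htf i).2.2
  -- closed sets containing each arc
  set Fk : Fin N → Set ℂ := fun j => closedBall ζ₀ (r₁ / 2) ∩ φ ⁻¹' pjRay N j with hFkdef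
  have hφcont : ContinuousOn φ (closedBall ζ₀ (r₁ / 2)) := by
    intro z hz
    exact ((hr₁ _ (mem_ball.mp (hcb₁ hz))).2.1).continuousAt.continuousWithinAt
  have hFkclosed : ∀ j : Fin N, IsClosed (Fk j) :=
    fun j => hφcont.preimage_isClosed_of_isClosed Metric.isClosed_closedBall (pjRay_isClosed N j)
  have hSkFk : ∀ j : Fin N, Sk j ⊆ Fk j := by
    intro j ζ hζ
    obtain ⟨hbm, hne, t, ht, htρ, hφ⟩ := hζ
    exact ⟨hcb hbm, ⟨t, le_of_lt ht, hφ⟩⟩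
  have hSFk : ∀ z ∈ S, ∀ j : Fin N, φ z ∈ pjRay N j → z ∈ Sk j := by
    intro z hz j hray
    obtain ⟨i, hi⟩ := hSdec z hz
    obtain ⟨hbm, hne, t, ht, htρ, hφi⟩ := hi
    obtain ⟨s, hs, hφj⟩ := hray
    have heq := hφi.symm.trans hφj
    have habs : t = s := by
      have h2 := congrArg Complex.abs heq
      rwa [map_mul, map_mul, pjDir_abs, pjDir_abs, mul_one, mul_one, Complex.abs_ofReal,
        Complex.abs_ofReal, abs_of_pos ht, _root_.abs_of_nonneg hs] at h2
    exact ⟨hbm, hne, s, by rw [← habs]; exact ht, by rw [← habs]; exact htρ, hφj⟩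
  -- each connected component is exactly one arc
  have hcomp : ∀ i : Fin N, connectedComponentIn S (p i) = Sk i := by
    intro i
    apply Set.Subset.antisymm
    · have hsub := preconn_closed_pair (s := connectedComponentIn S (p i)) (F₁ := Fk i)
        (F₂ := ⋃ j ∈ {j : Fin N | j ≠ i}, Fk j) isPreconnected_connectedComponentIn
        (hFkclosed i)
        (Set.Finite.isClosed_biUnion (Set.toFinite _) (fun j _ => hFkclosed j))
        ?_ ?_ ?_
      · intro z hz
        have hzS : z ∈ S := connectedComponentIn_subset S (p i) hz
        have hzF := hsub hz
        exact hSFk z hzS i hzF.2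
      · intro z hz
        have hzS : z ∈ S := connectedComponentIn_subset S (p i) hz
        obtain ⟨j, hj⟩ := hSdec z hzS
        rcases eq_or_ne j i with rfl | hne
        · exact Or.inl (hSkFk j hj)
        · exact Or.inr (Set.mem_biUnion hne (hSkFk j hj))
      · intro z hz hz1 hz2
        have hzS : z ∈ S := connectedComponentIn_subset S (p i) hz
        obtain ⟨j, hjne, hjF⟩ := Set.mem_iUnion₂.mp hz2
        have hzi : z ∈ Sk i := hSFk z hzS i hz1.2
        have hzj : z ∈ Sk j := hSFk z hzS j hjF.2
        exact hjne (hSkdisj j i z hzj hzi)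
      · exact ⟨p i, mem_connectedComponentIn (hSkS i (hpS i)), hSkFk i (hpS i)⟩
    · exact (hSkconn i).subset_connectedComponentIn (hpS i) (hSkS i)
  -- assemble the answer
  refine ⟨p, fun i => hSkS i (hpS i), ?_, ?_, ?_⟩
  · intro i j hij hEq
    rw [hcomp i, hcomp j] at hEq
    have : p i ∈ Sk j := hEq ▸ hpS i
    exact hij (hSkdisj i j (p i) (hpS i) this)
  · intro z hz
    obtain ⟨i, hi⟩ := hSdec z hz
    exact ⟨i, by rw [hcomp i]; exact hi⟩
  · intro i
    constructor
    · exact ⟨⟨p i, mem_connectedComponentIn (hSkS i (hpS i))⟩,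
        isPreconnected_connectedComponentIn⟩
    · rw [hcomp i]
      apply mem_closure_of_tendsto (htend0 i)
      filter_upwards [hev' i] with t ht
      exact hC1 i t ht.1 ht.2.1 ht.2.2
end
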